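/- arXiv:2311.03134 — 8 statements merged into one kernel-verified Lean document; each statement's English description precedes it below -/
import Mathlib

section
/- Let (X_i)_{i∈ℤ} be integrable random variables on a probability space, adapted measurability: each X_i is F_∞-measurable and E(X_i | F_{-∞}) = 0, where (F_i) is a filtration. Suppose there exist a martingale difference sequence (Y_i) with respect to (F_i) and integrable random variables (U_i) such that X_i = Y_i + U_i − U_{i+1} for all i, and for every k, E(U_{k+i} | F_k) → 0 and U_{k−i} − E(U_{k−i} | F_k) → 0 in L¹ as i → ∞. Then for every k the series V_k = Σ_{i≥0} E(X_{k+i} | F_{k−1}) and W_k = Σ_{i≥1} [X_{k−i} − E(X_{k−i} | F_{k−1})] converge in L¹, and moreover V_k = E(U_k | F_{k−1}) and W_k = −U_k + E(U_k | F_{k−1}). -/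
open MeasureTheory Filter Finset
open scoped ENNReal Topology

/-- Theorem 1, direction (i) ⇒ (ii): if a non-stationary process `X` admits a
martingale-coboundary decomposition `X_i = Y_i + U_i - U_{i+1}` with the tail
conditions (2), then the series `V_k` and `W_k` converge in `L¹`, with
`V_k = E(U_k | 𝓕_{k-1})` and `W_k = -U_k + E(U_k | 𝓕_{k-1})`. -/
theorem martingale_coboundary_necessity
    {Ω : Type*} {m0 : MeasurableSpace Ω} {μ : Measure Ω} [IsProbabilityMeasure μ]
    (𝓕 : Filtration ℤ m0) (X Y U : ℤ → Ω → ℝ)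
    (hXint : ∀ i, Integrable (X i) μ)
    (hXmeas : ∀ i, AEStronglyMeasurable[⨆ j, 𝓕 j] (X i) μ)
    (hXtail : ∀ i, μ[X i | ⨅ j, 𝓕 j] =ᵐ[μ] 0)
    (hYint : ∀ i, Integrable (Y i) μ)
    (hYmeas : ∀ i, AEStronglyMeasurable[𝓕 i] (Y i) μ)
    (hYmds : ∀ i, μ[Y i | 𝓕 (i - 1)] =ᵐ[μ] 0)
    (hUint : ∀ i, Integrable (U i) μ)
    (hdecomp : ∀ i, X i =ᵐ[μ] fun ω => Y i ω + U i ω - U (i + 1) ω)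
    (hU1 : ∀ k : ℤ,
      Tendsto (fun i : ℕ => eLpNorm (μ[U (k + i) | 𝓕 k]) 1 μ) atTop (𝓝 0))
    (hU2 : ∀ k : ℤ,
      Tendsto (fun i : ℕ =>
        eLpNorm (fun ω => U (k - i) ω - (μ[U (k - i) | 𝓕 k]) ω) 1 μ) atTop (𝓝 0)) :
    ∀ k : ℤ,
      Tendsto (fun N : ℕ =>
        eLpNorm (fun ω =>
          (∑ i ∈ Finset.range N, (μ[X (k + i) | 𝓕 (k - 1)]) ω)
            - (μ[U k | 𝓕 (k - 1)]) ω) 1 μ) atTop (𝓝 0) ∧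
      Tendsto (fun N : ℕ =>
        eLpNorm (fun ω =>
          (∑ i ∈ Finset.range N,
            (X (k - (i + 1)) ω - (μ[X (k - (i + 1)) | 𝓕 (k - 1)]) ω))
            - (-(U k ω) + (μ[U k | 𝓕 (k - 1)]) ω)) 1 μ) atTop (𝓝 0) := by
  intro k
  have hm : 𝓕 (k - 1) ≤ m0 := 𝓕.le _
  -- conditional expectation of X j
  have hXc : ∀ j : ℤ, μ[X j | 𝓕 (k-1)]
      =ᵐ[μ] μ[Y j | 𝓕 (k-1)] + (μ[U j | 𝓕 (k-1)] - μ[U (j+1) | 𝓕 (k-1)]) := by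
    intro j
    have h1 : X j =ᵐ[μ] Y j + (U j - U (j+1)) := by
      filter_upwards [hdecomp j] with ω h
      simp only [Pi.add_apply, Pi.sub_apply, h]; ring
    calc μ[X j | 𝓕 (k-1)] =ᵐ[μ] μ[Y j + (U j - U (j+1)) | 𝓕 (k-1)] := condExp_congr_ae h1
    _ =ᵐ[μ] μ[Y j | 𝓕 (k-1)] + μ[U j - U (j+1) | 𝓕 (k-1)] :=
        condExp_add (hYint j) ((hUint j).sub (hUint (j+1))) _
    _ =ᵐ[μ] μ[Y j | 𝓕 (k-1)] + (μ[U j | 𝓕 (k-1)] - μ[U (j+1) | 𝓕 (k-1)]) := by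
        filter_upwards [condExp_sub (hUint j) (hUint (j+1)) (m := 𝓕 (k-1))] with ω h
        simp [h]
  -- Y's condexp vanishes for j ≥ k
  have hYzero : ∀ j : ℤ, k ≤ j → μ[Y j | 𝓕 (k-1)] =ᵐ[μ] 0 := by
    intro j hj
    have h1 : μ[μ[Y j | 𝓕 (j-1)] | 𝓕 (k-1)] =ᵐ[μ] μ[Y j | 𝓕 (k-1)] :=
      condExp_condExp_of_le (𝓕.mono (by omega)) (𝓕.le (j-1))
    refine h1.symm.trans ?_
    refine (condExp_congr_ae (hYmds j)).trans ?_
    simp [condExp_zero]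
  -- Y equals its condexp for j ≤ k-1
  have hYfix : ∀ j : ℤ, j ≤ k - 1 → μ[Y j | 𝓕 (k-1)] =ᵐ[μ] Y j := by
    intro j hj
    exact condExp_of_aestronglyMeasurable' hm ((hYmeas j).mono (𝓕.mono hj)) (hYint j)
  constructor
  · -- V part
    have key : ∀ᵐ ω ∂μ, ∀ i : ℕ, (μ[X (k + i) | 𝓕 (k-1)]) ω
        = (μ[U (k + i) | 𝓕 (k-1)]) ω - (μ[U (k + (i+1:ℕ)) | 𝓕 (k-1)]) ω := by
      rw [ae_all_iff]
      intro i
      filter_upwards [hXc (k + i), hYzero (k + i) (by omega)] with ω h1 h2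
      have : (k : ℤ) + i + 1 = k + (i+1:ℕ) := by push_cast; ring
      rw [h1, ← this]
      simp [h2]
    have keyN : ∀ N : ℕ, (fun ω =>
        (∑ i ∈ Finset.range N, (μ[X (k + i) | 𝓕 (k-1)]) ω) - (μ[U k | 𝓕 (k-1)]) ω)
        =ᵐ[μ] fun ω => -((μ[U (k + (N:ℕ)) | 𝓕 (k-1)]) ω) := by
      intro N
      filter_upwards [key] with ω h
      have := Finset.sum_range_sub' (fun i : ℕ => (μ[U (k + (i:ℕ)) | 𝓕 (k-1)]) ω) N
      rw [Finset.sum_congr rfl (fun i _ => h i), this]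
      simp only [Nat.cast_zero, add_zero]
      ring
    have t1 : Tendsto (fun N : ℕ => eLpNorm (μ[U (k + (N:ℕ)) | 𝓕 (k-1)]) 1 μ)
        atTop (𝓝 0) := by
      have h := (hU1 (k-1)).comp (tendsto_add_atTop_nat 1)
      refine h.congr fun N => ?_
      simp only [Function.comp_apply]
      congr 2
      push_cast; ring
    refine t1.congr fun N => ?_
    rw [eLpNorm_congr_ae (keyN N), ← eLpNorm_neg (μ[U (k + (N:ℕ)) | 𝓕 (k-1)]) 1 μ]
    rfl
  · -- W part
    have key : ∀ᵐ ω ∂μ, ∀ i : ℕ,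
        X (k - (i + 1)) ω - (μ[X (k - (i + 1)) | 𝓕 (k-1)]) ω
        = (U (k - ((i:ℕ)+1)) ω - (μ[U (k - ((i:ℕ)+1)) | 𝓕 (k-1)]) ω)
          - (U (k - (i:ℕ)) ω - (μ[U (k - (i:ℕ)) | 𝓕 (k-1)]) ω) := by
      rw [ae_all_iff]
      intro i
      have he : k - ((i:ℤ) + 1) + 1 = k - (i:ℕ) := by push_cast; ring
      filter_upwards [hXc (k - (i+1)), hYfix (k - (i+1)) (by omega),
        hdecomp (k - (i+1))] with ω h1 h2 h3
      rw [h1, h3]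
      simp only [Pi.add_apply, Pi.sub_apply, h2, ← he]
      ring
    have keyN : ∀ N : ℕ, (fun ω =>
        (∑ i ∈ Finset.range N,
          (X (k - (i + 1)) ω - (μ[X (k - (i + 1)) | 𝓕 (k-1)]) ω))
          - (-(U k ω) + (μ[U k | 𝓕 (k-1)]) ω))
        =ᵐ[μ] fun ω => U (k - (N:ℕ)) ω - (μ[U (k - (N:ℕ)) | 𝓕 (k-1)]) ω := by
      intro N
      filter_upwards [key] with ω h
      have := Finset.sum_range_sub
        (fun i : ℕ => U (k - (i:ℕ)) ω - (μ[U (k - (i:ℕ)) | 𝓕 (k-1)]) ω) N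
      have hc : ∀ i : ℕ, ((i:ℤ) + 1) = ((i+1:ℕ):ℤ) := by intro i; push_cast; ring
      calc (∑ i ∈ Finset.range N,
          (X (k - (i + 1)) ω - (μ[X (k - (i + 1)) | 𝓕 (k-1)]) ω))
          - (-(U k ω) + (μ[U k | 𝓕 (k-1)]) ω)
          = (∑ i ∈ Finset.range N,
            ((U (k - ((i+1:ℕ):ℤ)) ω - (μ[U (k - ((i+1:ℕ):ℤ)) | 𝓕 (k-1)]) ω)
              - (U (k - (i:ℕ)) ω - (μ[U (k - (i:ℕ)) | 𝓕 (k-1)]) ω)))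
            - (-(U k ω) + (μ[U k | 𝓕 (k-1)]) ω) := by
            rw [Finset.sum_congr rfl (fun i _ => by rw [h i, hc i])]
        _ = U (k - (N:ℕ)) ω - (μ[U (k - (N:ℕ)) | 𝓕 (k-1)]) ω := by
            rw [this]
            simp only [Nat.cast_zero, sub_zero]
            ring
    have t2 : Tendsto (fun N : ℕ =>
        eLpNorm (fun ω => U (k - (N:ℕ)) ω - (μ[U (k - (N:ℕ)) | 𝓕 (k-1)]) ω) 1 μ)
        atTop (𝓝 0) := by
      have h := hU2 (k-1)
      have he : ∀ i : ℕ, k - 1 - (i:ℤ) = k - ((i+1:ℕ):ℤ) := by intro i; push_cast; ring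
      simp only [he] at h
      exact (tendsto_add_atTop_iff_nat 1).mp h
    exact t2.congr fun N => (eLpNorm_congr_ae (keyN N)).symm
end

section
/- Let (X_i)_{i∈ℤ} be integrable random variables, each F_∞-measurable with E(X_i | F_{-∞}) = 0 for a filtration (F_i). Suppose for every k the series V_k = Σ_{i≥0} E(X_{k+i} | F_{k−1}) and W_k = Σ_{i≥1} [X_{k−i} − E(X_{k−i} | F_{k−1})] converge in L¹. Define U_k = V_k − W_k and Y_k = X_k − U_k + U_{k+1}. Then (Y_k) is a martingale difference sequence with respect to (F_k), i.e. Y_k is F_k-measurable and E(Y_k | F_{k−1}) = 0, and X_k = Y_k + U_k − U_{k+1} for all k. -/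
/-!
Let `P_k Z = E(Z | 𝓕_k) - E(Z | 𝓕_{k-1})`. Along partial sums, the `X`-terms of
`X_k - U_k + U_{k+1}` telescope, and what remains is `∑_{k-N ≤ j ≤ k+N} P_k X_j`, up to the
`N`-th term `X_{k-N} - E(X_{k-N} | 𝓕_k)` of the series defining `W_{k+1}`, which tends to `0` in
`L¹`. Every `P_k X_j` is `𝓕_k`-measurable with vanishing `𝓕_{k-1}`-conditional expectation, and
these two properties cut out a closed subspace of `L¹`, so they pass to the limit `Y_k`.
-/

open MeasureTheory Filter Finset
open scoped ENNReal Topology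

section Telescoping

variable {G : Type*} [AddCommGroup G]

theorem sum_range_sub_add_sum_range_sub_eq (x e e' : ℤ → G) (k : ℤ) (N : ℕ) :
    ∑ i ∈ range (N + 1), (e (k + i) - e' (k + i)) +
        ∑ i ∈ range N, (e (k - (i + 1)) - e' (k - (i + 1))) =
      x k - ∑ i ∈ range (N + 1), e' (k + i) +
        ∑ i ∈ range N, (x (k - (i + 1)) - e' (k - (i + 1))) +
        ∑ i ∈ range N, e (k + 1 + i) - ∑ i ∈ range N, (x (k - i) - e (k - i)) -
        (x (k - N) - e (k - N)) := by
  induction N with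
  | zero => simp
  | succ n ih =>
    rw [sum_range_succ _ (n + 1), sum_range_succ (fun i : ℕ => e (k - (i + 1)) - _),
      sum_range_succ _ (n + 1), sum_range_succ (fun i : ℕ => x (k - (i + 1)) - _),
      sum_range_succ (fun i : ℕ => e (k + 1 + i)), sum_range_succ (fun i : ℕ => x (k - i) - _)]
    have h₁ : k + ((n + 1 : ℕ) : ℤ) = k + 1 + n := by push_cast; ring
    have h₂ : k - ((n + 1 : ℕ) : ℤ) = k - (n + 1) := by push_cast; ring
    rw [h₁, h₂, add_add_add_comm, ih]
    abel

variable [TopologicalSpace G] [IsTopologicalAddGroup G]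

theorem tendsto_zero_of_tendsto_sum_range {f : ℕ → G} {a : G}
    (h : Tendsto (fun N => ∑ i ∈ range N, f i) atTop (𝓝 a)) : Tendsto f atTop (𝓝 0) := by
  simpa [sum_range_succ] using (h.comp (tendsto_add_atTop_nat 1)).sub h

theorem tendsto_sum_range_sub_add_sum_range_sub {x e e' : ℤ → G} {k : ℤ} {v v' w w' : G}
    (hv : Tendsto (fun N => ∑ i ∈ range N, e' (k + i)) atTop (𝓝 v))
    (hv' : Tendsto (fun N => ∑ i ∈ range N, e (k + 1 + i)) atTop (𝓝 v'))
    (hw : Tendsto (fun N => ∑ i ∈ range N, (x (k - (i + 1)) - e' (k - (i + 1)))) atTop (𝓝 w))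
    (hw' : Tendsto (fun N => ∑ i ∈ range N, (x (k - i) - e (k - i))) atTop (𝓝 w')) :
    Tendsto (fun N => ∑ i ∈ range (N + 1), (e (k + i) - e' (k + i)) +
        ∑ i ∈ range N, (e (k - (i + 1)) - e' (k - (i + 1))))
      atTop (𝓝 (x k - v + w + v' - w')) := by
  simp_rw [sum_range_sub_add_sum_range_sub_eq x e e']
  simpa using (((((hv.comp (tendsto_add_atTop_nat 1)).const_sub (x k)).add hw).add hv').sub
    hw').sub (tendsto_zero_of_tendsto_sum_range hw')

end Telescoping

namespace MeasureTheory

variable {α E : Type*} {m m' m0 : MeasurableSpace α} {μ : Measure α} [NormedAddCommGroup E]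

theorem Integrable.toL1_sum {ι : Type*} (s : Finset ι) {f : ι → α → E}
    (hf : ∀ i, Integrable (f i) μ) :
    (integrable_finsetSum' s fun i _ => hf i).toL1 (∑ i ∈ s, f i) =
      ∑ i ∈ s, (hf i).toL1 (f i) := by
  classical
  induction s using Finset.induction_on with
  | empty => simp
  | insert a s ha ih =>
    simp only [sum_insert ha]
    rw [Integrable.toL1_add _ _ (hf a) (integrable_finsetSum' s fun i _ => hf i), ih]

theorem tendsto_sum_range_toL1 {f : ℕ → α → E} {g : α → E} (hf : ∀ i, Integrable (f i) μ)
    (hg : Integrable g μ)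
    (h : Tendsto (fun N => eLpNorm (fun ω => ∑ i ∈ range N, f i ω - g ω) 1 μ) atTop (𝓝 0)) :
    Tendsto (fun N => ∑ i ∈ range N, (hf i).toL1 (f i)) atTop (𝓝 (hg.toL1 g)) := by
  simp_rw [← Integrable.toL1_sum]
  refine (Lp.tendsto_Lp_iff_tendsto_eLpNorm'' _ _ _ _).2 ?_
  simp only [Finset.sum_fn]
  exact h

variable [NormedSpace ℝ E] [CompleteSpace E]

variable (E m) in
noncomputable def martingaleDifferenceL1 (hm' : m' ≤ m0) (μ : Measure α)
    [SigmaFinite (μ.trim hm')] : Submodule ℝ (α →₁[μ] E) :=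
  lpMeas E ℝ m 1 μ ⊓ LinearMap.ker (condExpL1CLM E hm' μ).toLinearMap

theorem isClosed_martingaleDifferenceL1 (hm : m ≤ m0) (hm' : m' ≤ m0)
    [SigmaFinite (μ.trim hm')] :
    IsClosed (martingaleDifferenceL1 E m hm' μ : Set (α →₁[μ] E)) :=
  (isClosed_aestronglyMeasurable hm).inter (condExpL1CLM E hm' μ).isClosed_ker

theorem Integrable.toL1_mem_martingaleDifferenceL1_iff (hm' : m' ≤ m0)
    [SigmaFinite (μ.trim hm')] {f : α → E} (hf : Integrable f μ) :
    hf.toL1 f ∈ martingaleDifferenceL1 E m hm' μ ↔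
      AEStronglyMeasurable[m] f μ ∧ μ[f | m'] =ᵐ[μ] 0 := by
  have hmeas : AEStronglyMeasurable[m] (hf.toL1 f) μ ↔ AEStronglyMeasurable[m] f μ :=
    ⟨fun h => h.congr hf.coeFn_toL1, fun h => h.congr hf.coeFn_toL1.symm⟩
  have hcond : condExpL1CLM E hm' μ (hf.toL1 f) = 0 ↔ μ[f | m'] =ᵐ[μ] 0 := by
    rw [Lp.eq_zero_iff_ae_eq_zero]
    exact (condExp_ae_eq_condExpL1CLM hm' hf).congr_left.symm
  rw [martingaleDifferenceL1, Submodule.mem_inf, mem_lpMeas_iff_aestronglyMeasurable,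
    LinearMap.mem_ker, ContinuousLinearMap.coe_coe, hmeas, hcond]

theorem toL1_condExp_sub_toL1_condExp_mem_martingaleDifferenceL1 (hm : m ≤ m0) (hm' : m' ≤ m)
    [SigmaFinite (μ.trim hm)] [SigmaFinite (μ.trim (hm'.trans hm))] (f : α → E) :
    integrable_condExp.toL1 (μ[f | m]) - integrable_condExp.toL1 (μ[f | m']) ∈
      martingaleDifferenceL1 E m (hm'.trans hm) μ := by
  rw [← Integrable.toL1_sub, Integrable.toL1_mem_martingaleDifferenceL1_iff]
  refine ⟨stronglyMeasurable_condExp.aestronglyMeasurable.sub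
    (stronglyMeasurable_condExp.mono hm').aestronglyMeasurable, ?_⟩
  calc μ[μ[f | m] - μ[f | m'] | m'] =ᵐ[μ] μ[μ[f | m] | m'] - μ[μ[f | m'] | m'] :=
        condExp_sub integrable_condExp integrable_condExp m'
    _ =ᵐ[μ] μ[f | m'] - μ[f | m'] :=
        (condExp_condExp_of_le hm' hm).sub (condExp_condExp_of_le le_rfl (hm'.trans hm))
    _ = 0 := sub_self _

end MeasureTheory

theorem tendsto_toL1_sum_condExp_sub_condExp {Ω : Type*} {m0 : MeasurableSpace Ω}
    {μ : Measure Ω} (𝓕 : Filtration ℤ m0) {X V W : ℤ → Ω → ℝ}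
    (hXint : ∀ i, Integrable (X i) μ) (hVint : ∀ k, Integrable (V k) μ)
    (hWint : ∀ k, Integrable (W k) μ)
    (hV : ∀ k : ℤ, Tendsto (fun N : ℕ => eLpNorm (fun ω =>
      (∑ i ∈ range N, (μ[X (k + i) | 𝓕 (k - 1)]) ω) - V k ω) 1 μ) atTop (𝓝 0))
    (hW : ∀ k : ℤ, Tendsto (fun N : ℕ => eLpNorm (fun ω =>
      (∑ i ∈ range N, (X (k - (i + 1)) ω - (μ[X (k - (i + 1)) | 𝓕 (k - 1)]) ω)) - W k ω) 1 μ)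
      atTop (𝓝 0))
    (k : ℤ) :
    Tendsto (fun N : ℕ =>
        ∑ i ∈ range (N + 1), (integrable_condExp.toL1 (μ[X (k + i) | 𝓕 k]) -
          integrable_condExp.toL1 (μ[X (k + i) | 𝓕 (k - 1)])) +
        ∑ i ∈ range N, (integrable_condExp.toL1 (μ[X (k - (i + 1)) | 𝓕 k]) -
          integrable_condExp.toL1 (μ[X (k - (i + 1)) | 𝓕 (k - 1)])))
      atTop (𝓝 ((((((hXint k).sub (hVint k)).add (hWint k)).add (hVint (k + 1))).sub
        (hWint (k + 1))).toL1 (X k - V k + W k + V (k + 1) - W (k + 1)))) := by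
  have hXc : ∀ n j, Integrable (X j - μ[X j | 𝓕 n]) μ :=
    fun n j => (hXint j).sub integrable_condExp
  have hT := tendsto_sum_range_sub_add_sum_range_sub (x := fun j => (hXint j).toL1 (X j))
    (e := fun j => integrable_condExp.toL1 (μ[X j | 𝓕 k]))
    (e' := fun j => integrable_condExp.toL1 (μ[X j | 𝓕 (k - 1)]))
    (tendsto_sum_range_toL1 _ (hVint k) (hV k))
    (by simpa only [add_sub_cancel_right] using
      tendsto_sum_range_toL1 (fun _ => integrable_condExp) (hVint (k + 1)) (hV (k + 1)))
    (by simpa only [Integrable.toL1_sub _ _ (hXint _) integrable_condExp] using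
      tendsto_sum_range_toL1 (fun _ => hXc _ _) (hWint k) (hW k))
    (by simpa only [Integrable.toL1_sub _ _ (hXint _) integrable_condExp, add_sub_cancel_right,
        add_sub_add_right_eq_sub] using
      tendsto_sum_range_toL1 (fun _ => hXc _ _) (hWint (k + 1)) (hW (k + 1)))
  simpa only [← Integrable.toL1_add, ← Integrable.toL1_sub] using hT

theorem martingale_coboundary_sufficiency_general
    {Ω : Type*} {m0 : MeasurableSpace Ω} {μ : Measure Ω} [IsProbabilityMeasure μ]
    (𝓕 : Filtration ℤ m0) (X V W : ℤ → Ω → ℝ)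
    (hXint : ∀ i, Integrable (X i) μ)
    (hVint : ∀ k, Integrable (V k) μ)
    (hWint : ∀ k, Integrable (W k) μ)
    (hV : ∀ k : ℤ,
      Tendsto (fun N : ℕ =>
        eLpNorm (fun ω =>
          (∑ i ∈ Finset.range N, (μ[X (k + i) | 𝓕 (k - 1)]) ω) - V k ω) 1 μ)
        atTop (𝓝 0))
    (hW : ∀ k : ℤ,
      Tendsto (fun N : ℕ =>
        eLpNorm (fun ω =>
          (∑ i ∈ Finset.range N,
            (X (k - (i + 1)) ω - (μ[X (k - (i + 1)) | 𝓕 (k - 1)]) ω)) - W k ω) 1 μ)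
        atTop (𝓝 0))
    (U Y : ℤ → Ω → ℝ)
    (hU : ∀ k, U k = fun ω => V k ω - W k ω)
    (hY : ∀ k, Y k = fun ω => X k ω - U k ω + U (k + 1) ω) :
    ∀ k : ℤ,
      AEStronglyMeasurable[𝓕 k] (Y k) μ ∧
      μ[Y k | 𝓕 (k - 1)] =ᵐ[μ] 0 ∧
      (X k = fun ω => Y k ω + U k ω - U (k + 1) ω) := by
  intro k
  have hle : 𝓕 (k - 1) ≤ 𝓕 k := 𝓕.mono (sub_le_self k zero_le_one)
  have hYk : Y k = X k - V k + W k + V (k + 1) - W (k + 1) := by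
    rw [hY, hU, hU]; funext ω; simp only [Pi.add_apply, Pi.sub_apply]; ring
  have hmem := (isClosed_martingaleDifferenceL1 (𝓕.le k) (hle.trans (𝓕.le k))).mem_of_tendsto
    (tendsto_toL1_sum_condExp_sub_condExp 𝓕 hXint hVint hWint hV hW k)
    (.of_forall fun N => add_mem
      (sum_mem fun i _ => toL1_condExp_sub_toL1_condExp_mem_martingaleDifferenceL1 (𝓕.le k) hle _)
      (sum_mem fun i _ => toL1_condExp_sub_toL1_condExp_mem_martingaleDifferenceL1 (𝓕.le k) hle _))
  rw [SetLike.mem_coe, Integrable.toL1_mem_martingaleDifferenceL1_iff, ← hYk] at hmem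
  exact ⟨hmem.1, hmem.2, by rw [hY]; funext ω; ring⟩

/-- Theorem 1, direction (ii) ⇒ (i): if for every `k` the series
`V_k = Σ_{i≥0} E(X_{k+i}|𝓕_{k-1})` and `W_k = Σ_{i≥1}[X_{k-i} - E(X_{k-i}|𝓕_{k-1})]`
converge in `L¹`, then with `U_k = V_k - W_k` and `Y_k = X_k - U_k + U_{k+1}`,
the sequence `(Y_k)` is a martingale difference sequence for `(𝓕_k)` and
`X_k = Y_k + U_k - U_{k+1}`. -/
theorem martingale_coboundary_sufficiency
    {Ω : Type*} {m0 : MeasurableSpace Ω} {μ : Measure Ω} [IsProbabilityMeasure μ]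
    (𝓕 : Filtration ℤ m0) (X V W : ℤ → Ω → ℝ)
    (hXint : ∀ i, Integrable (X i) μ)
    (hXmeas : ∀ i, AEStronglyMeasurable[⨆ j, 𝓕 j] (X i) μ)
    (hXtail : ∀ i, μ[X i | ⨅ j, 𝓕 j] =ᵐ[μ] 0)
    (hVint : ∀ k, Integrable (V k) μ)
    (hWint : ∀ k, Integrable (W k) μ)
    (hV : ∀ k : ℤ,
      Tendsto (fun N : ℕ =>
        eLpNorm (fun ω =>
          (∑ i ∈ Finset.range N, (μ[X (k + i) | 𝓕 (k - 1)]) ω) - V k ω) 1 μ)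
        atTop (𝓝 0))
    (hW : ∀ k : ℤ,
      Tendsto (fun N : ℕ =>
        eLpNorm (fun ω =>
          (∑ i ∈ Finset.range N,
            (X (k - (i + 1)) ω - (μ[X (k - (i + 1)) | 𝓕 (k - 1)]) ω)) - W k ω) 1 μ)
        atTop (𝓝 0))
    (U Y : ℤ → Ω → ℝ)
    (hU : ∀ k, U k = fun ω => V k ω - W k ω)
    (hY : ∀ k, Y k = fun ω => X k ω - U k ω + U (k + 1) ω) :
    ∀ k : ℤ,
      AEStronglyMeasurable[𝓕 k] (Y k) μ ∧
      μ[Y k | 𝓕 (k - 1)] =ᵐ[μ] 0 ∧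
      (X k = fun ω => Y k ω + U k ω - U (k + 1) ω) :=
  martingale_coboundary_sufficiency_general 𝓕 X V W hXint hVint hWint hV hW U Y hU hY
end

section
/- Under the hypotheses of the sufficiency direction (convergence in L¹ of V_k = Σ_{i≥0} E(X_{k+i} | F_{k−1}) and W_k = Σ_{i≥1} [X_{k−i} − E(X_{k−i} | F_{k−1})] for every k, with X_i F_∞-measurable and E(X_i | F_{-∞}) = 0), the functions U_k = V_k − W_k satisfy: for every fixed k, E(U_{k+j} | F_k) → 0 in L¹ and U_{k−j} − E(U_{k−j} | F_k) → 0 in L¹ as j → ∞. -/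
open MeasureTheory Filter Finset
open scoped ENNReal Topology

/-! Conditional expectation is an `L¹` contraction, so it commutes with `L¹`-convergent series,
and `L¹` limits are unique a.e. For `l > k` every term of the series of `W_l` has vanishing
`𝓕_k`-conditional expectation, while `E(E(X_{l+i}|𝓕_{l-1})|𝓕_k) = E(X_{l+i}|𝓕_k)`; hence
`E(U_{k+j}|𝓕_k)` is the tail `V_{k+1} - ∑_{i<j-1} E(X_{k+1+i}|𝓕_k)` of the series of `V_{k+1}`.
For `l ≤ k` the terms of the series of `V_l` are `𝓕_k`-measurable, and
`E(U_{k-j}|𝓕_k) - U_{k-j}` is the tail `W_{k+1} - ∑_{i≤j} (X_{k-i} - E(X_{k-i}|𝓕_k))` of the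
series of `W_{k+1}`. Tails of convergent series tend to `0`. -/

universe u v

section HasSumLp

variable {Ω : Type u} {E : Type v} {m0 : MeasurableSpace Ω} {μ : Measure Ω}
  [NormedAddCommGroup E] {p : ℝ≥0∞} {a b : ℕ → Ω → E} {A B : Ω → E}

/-- Unlike `HasSum`, this is convergence of the partial sums in the order of `ℕ`. -/
def HasSumLp (p : ℝ≥0∞) (μ : Measure Ω) (a : ℕ → Ω → E) (A : Ω → E) : Prop :=
  Tendsto (fun N => eLpNorm (∑ i ∈ range N, a i - A) p μ) atTop (𝓝 0)

namespace HasSumLp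

theorem tendsto_eLpNorm_sub_sum (h : HasSumLp p μ a A) :
    Tendsto (fun N => eLpNorm (A - ∑ i ∈ range N, a i) p μ) atTop (𝓝 0) :=
  h.congr fun _ => eLpNorm_sub_comm _ _ _ _

theorem congr_ae (h : HasSumLp p μ a A) (hab : ∀ i, a i =ᵐ[μ] b i) (hAB : A =ᵐ[μ] B) :
    HasSumLp p μ b B := by
  refine h.congr fun N => eLpNorm_congr_ae ?_
  exact (eventuallyEq_sum fun i _ => hab i).sub hAB

theorem sum_range_add (h : HasSumLp p μ a A) (n : ℕ) :
    HasSumLp p μ (fun i => a (n + i)) (A - ∑ i ∈ range n, a i) := by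
  refine ((tendsto_add_atTop_iff_nat n).2 h).congr fun N => ?_
  rw [add_comm N, Finset.sum_range_add]
  congr 1
  abel

theorem sub (hp : 1 ≤ p) (ha : ∀ i, AEStronglyMeasurable (a i) μ)
    (hA : AEStronglyMeasurable A μ)
    (hb : ∀ i, AEStronglyMeasurable (b i) μ) (hB : AEStronglyMeasurable B μ)
    (h₁ : HasSumLp p μ a A) (h₂ : HasSumLp p μ b B) : HasSumLp p μ (a - b) (A - B) := by
  refine tendsto_of_tendsto_of_tendsto_of_le_of_le tendsto_const_nhds
    (by simpa using h₁.add h₂) (fun _ => bot_le) fun N => ?_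
  have hsplit : ∑ i ∈ range N, (a - b) i - (A - B) =
      (∑ i ∈ range N, a i - A) - (∑ i ∈ range N, b i - B) := by
    simp only [Pi.sub_apply, sum_sub_distrib]
    abel
  rw [hsplit]
  exact eLpNorm_sub_le ((aestronglyMeasurable_sum _ fun i _ => ha i).sub hA)
    ((aestronglyMeasurable_sum _ fun i _ => hb i).sub hB) hp

theorem unique (hp : 1 ≤ p) (ha : ∀ i, AEStronglyMeasurable (a i) μ)
    (hA : AEStronglyMeasurable A μ) (hB : AEStronglyMeasurable B μ)
    (h₁ : HasSumLp p μ a A) (h₂ : HasSumLp p μ a B) : A =ᵐ[μ] B := by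
  have hle : ∀ N, eLpNorm (A - B) p μ ≤
      eLpNorm (∑ i ∈ range N, a i - B) p μ + eLpNorm (∑ i ∈ range N, a i - A) p μ := fun N => by
    have hS := aestronglyMeasurable_sum (range N) fun i _ => ha i
    rw [← sub_sub_sub_cancel_left B A (∑ i ∈ range N, a i)]
    exact eLpNorm_sub_le (hS.sub hB) (hS.sub hA) hp
  have hzero : eLpNorm (A - B) p μ = 0 :=
    le_antisymm (ge_of_tendsto' (by simpa using h₂.add h₁) hle) bot_le
  exact eventuallyEq_iff_sub.mpr ((eLpNorm_eq_zero_iff (hA.sub hB) (by positivity)).mp hzero)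

theorem condExp [NormedSpace ℝ E] [CompleteSpace E] {m : MeasurableSpace Ω} (hp : 1 ≤ p)
    (ha : ∀ i, Integrable (a i) μ) (hA : Integrable A μ) (h : HasSumLp p μ a A) :
    HasSumLp p μ (fun i => μ[a i | m]) (μ[A | m]) := by
  refine tendsto_of_tendsto_of_tendsto_of_le_of_le tendsto_const_nhds h
    (fun _ => bot_le) fun N => ?_
  have hcomm : μ[∑ i ∈ range N, a i - A | m] =ᵐ[μ] ∑ i ∈ range N, μ[a i | m] - μ[A | m] :=
    (condExp_sub (integrable_finsetSum' _ fun i _ => ha i) hA m).trans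
      ((condExp_finsetSum (fun i _ => ha i) m).sub EventuallyEq.rfl)
  rw [← eLpNorm_congr_ae hcomm]
  exact eLpNorm_condExp_le_eLpNorm _ hp

end HasSumLp

section CondExpTower

variable {Ω : Type u} {E : Type v} {m m' m0 : MeasurableSpace Ω} {μ : Measure Ω}
  [NormedAddCommGroup E] [NormedSpace ℝ E] [CompleteSpace E] {f : Ω → E}

theorem condExp_sub_condExp_ae_eq_zero (hmm' : m ≤ m') (hm' : m' ≤ m0)
    [SigmaFinite (μ.trim hm')] (hf : Integrable f μ) : μ[f - μ[f | m'] | m] =ᵐ[μ] 0 := by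
  filter_upwards [condExp_sub hf (integrable_condExp (m := m') (f := f)) m,
    condExp_condExp_of_le hmm' hm' (f := f)] with ω hsub htower
  simp [hsub, htower]

theorem condExp_condExp_of_ge (hm'm : m' ≤ m) (hm : m ≤ m0) [SigmaFinite (μ.trim hm)]
    (f : Ω → E) :
    μ[μ[f | m'] | m] = μ[f | m'] :=
  condExp_of_stronglyMeasurable hm (stronglyMeasurable_condExp.mono hm'm) integrable_condExp

end CondExpTower

section Coboundary

variable {Ω : Type u} {E : Type v} {m0 : MeasurableSpace Ω} {μ : Measure Ω}
  [NormedAddCommGroup E] [NormedSpace ℝ E] [CompleteSpace E]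
  {𝓕 : Filtration ℤ m0} [SigmaFiniteFiltration μ 𝓕] {X : ℤ → Ω → E} {V W : ℤ → Ω → E}
  {k l : ℤ}

theorem hasSumLp_condExp_of_lt (hX : ∀ i, Integrable (X i) μ) (hV : Integrable (V l) μ)
    (hW : Integrable (W l) μ)
    (hVsum : HasSumLp 1 μ (fun i : ℕ => μ[X (l + i) | 𝓕 (l - 1)]) (V l))
    (hWsum : HasSumLp 1 μ (fun i : ℕ => X (l - (i + 1)) - μ[X (l - (i + 1)) | 𝓕 (l - 1)]) (W l))
    (hkl : k < l) :
    HasSumLp 1 μ (fun i : ℕ => μ[X (l + i) | 𝓕 k]) (μ[V l - W l | 𝓕 k]) := by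
  have hk : 𝓕 k ≤ 𝓕 (l - 1) := 𝓕.mono (by omega)
  have hcond : ∀ i, Integrable (μ[X i | 𝓕 (l - 1)]) μ := fun _ => integrable_condExp
  have hpast : ∀ i : ℕ, Integrable (X (l - (i + 1)) - μ[X (l - (i + 1)) | 𝓕 (l - 1)]) μ :=
    fun _ => (hX _).sub (hcond _)
  have hU := hVsum.sub le_rfl (fun _ => integrable_condExp.aestronglyMeasurable)
    hV.aestronglyMeasurable (fun i => (hpast i).aestronglyMeasurable) hW.aestronglyMeasurable hWsum
  refine (hU.condExp (m := 𝓕 k) le_rfl (fun i => (hcond _).sub (hpast i))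
    (hV.sub hW)).congr_ae (fun i => ?_) EventuallyEq.rfl
  filter_upwards [condExp_sub (hcond (l + i)) (hpast i) (𝓕 k),
    condExp_condExp_of_le hk (𝓕.le _) (f := X (l + i)),
    condExp_sub_condExp_ae_eq_zero hk (𝓕.le _) (hX (l - (i + 1)))] with ω hsub htower hzero
  simp_all

theorem hasSumLp_condExp_sub_of_le (hX : ∀ i, Integrable (X i) μ) (hV : Integrable (V l) μ)
    (hW : Integrable (W l) μ)
    (hVsum : HasSumLp 1 μ (fun i : ℕ => μ[X (l + i) | 𝓕 (l - 1)]) (V l))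
    (hWsum : HasSumLp 1 μ (fun i : ℕ => X (l - (i + 1)) - μ[X (l - (i + 1)) | 𝓕 (l - 1)]) (W l))
    (hlk : l ≤ k) :
    HasSumLp 1 μ (fun i : ℕ => X (l - (i + 1)) - μ[X (l - (i + 1)) | 𝓕 k])
      (μ[V l - W l | 𝓕 k] - (V l - W l)) := by
  have hk : 𝓕 (l - 1) ≤ 𝓕 k := 𝓕.mono (by omega)
  have hcond : ∀ i, Integrable (μ[X i | 𝓕 (l - 1)]) μ := fun _ => integrable_condExp
  have hpast : ∀ i : ℕ, Integrable (X (l - (i + 1)) - μ[X (l - (i + 1)) | 𝓕 (l - 1)]) μ :=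
    fun _ => (hX _).sub (hcond _)
  have hterm : ∀ i : ℕ, Integrable (μ[X (l + i) | 𝓕 (l - 1)] -
      (X (l - (i + 1)) - μ[X (l - (i + 1)) | 𝓕 (l - 1)])) μ :=
    fun i => (hcond _).sub (hpast i)
  have hU := hVsum.sub le_rfl (fun _ => integrable_condExp.aestronglyMeasurable)
    hV.aestronglyMeasurable (fun i => (hpast i).aestronglyMeasurable) hW.aestronglyMeasurable hWsum
  refine ((hU.condExp (m := 𝓕 k) le_rfl hterm (hV.sub hW)).sub le_rfl
    (fun _ => integrable_condExp.aestronglyMeasurable) integrable_condExp.aestronglyMeasurable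
    (fun i => (hterm i).aestronglyMeasurable) (hV.sub hW).aestronglyMeasurable hU).congr_ae
    (fun i => ?_) EventuallyEq.rfl
  filter_upwards [condExp_sub (hcond (l + i)) (hpast i) (𝓕 k),
    condExp_sub (hX (l - (i + 1))) (hcond (l - (i + 1))) (𝓕 k)] with ω hsub hsub'
  simp_all [condExp_condExp_of_ge hk (𝓕.le k)]

theorem tendsto_eLpNorm_condExp_add (hX : ∀ i, Integrable (X i) μ)
    (hV : ∀ l, Integrable (V l) μ) (hW : ∀ l, Integrable (W l) μ)
    (hVsum : ∀ l, HasSumLp 1 μ (fun i : ℕ => μ[X (l + i) | 𝓕 (l - 1)]) (V l))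
    (hWsum : ∀ l,
      HasSumLp 1 μ (fun i : ℕ => X (l - (i + 1)) - μ[X (l - (i + 1)) | 𝓕 (l - 1)]) (W l))
    (k : ℤ) :
    Tendsto (fun j : ℕ => eLpNorm (μ[V (k + j) - W (k + j) | 𝓕 k]) 1 μ) atTop (𝓝 0) := by
  have hV₁ : HasSumLp 1 μ (fun i : ℕ => μ[X (k + 1 + i) | 𝓕 k]) (V (k + 1)) := by
    simpa only [add_sub_cancel_right] using hVsum (k + 1)
  rw [← tendsto_add_atTop_iff_nat 1]
  refine hV₁.tendsto_eLpNorm_sub_sum.congr fun n => eLpNorm_congr_ae ?_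
  have hl : k + ((n + 1 : ℕ) : ℤ) = k + 1 + n := by push_cast; ring
  rw [hl]
  refine HasSumLp.unique le_rfl (fun _ => integrable_condExp.aestronglyMeasurable)
    ((hV _).sub (integrable_finsetSum' _ fun _ _ => integrable_condExp)).aestronglyMeasurable
    integrable_condExp.aestronglyMeasurable (hV₁.sum_range_add n) ?_
  simpa only [Nat.cast_add, add_assoc] using hasSumLp_condExp_of_lt hX (hV _) (hW _) (hVsum _)
    (hWsum _) (by omega : k < k + 1 + n)

theorem tendsto_eLpNorm_sub_condExp_sub (hX : ∀ i, Integrable (X i) μ)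
    (hV : ∀ l, Integrable (V l) μ) (hW : ∀ l, Integrable (W l) μ)
    (hVsum : ∀ l, HasSumLp 1 μ (fun i : ℕ => μ[X (l + i) | 𝓕 (l - 1)]) (V l))
    (hWsum : ∀ l,
      HasSumLp 1 μ (fun i : ℕ => X (l - (i + 1)) - μ[X (l - (i + 1)) | 𝓕 (l - 1)]) (W l))
    (k : ℤ) :
    Tendsto (fun j : ℕ => eLpNorm (V (k - j) - W (k - j) - μ[V (k - j) - W (k - j) | 𝓕 k]) 1 μ)
      atTop (𝓝 0) := by
  have hW₁ : HasSumLp 1 μ (fun i : ℕ => X (k - i) - μ[X (k - i) | 𝓕 k]) (W (k + 1)) := by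
    simpa only [add_sub_cancel_right, add_sub_add_right_eq_sub] using hWsum (k + 1)
  refine ((tendsto_add_atTop_iff_nat 1).2 hW₁.tendsto_eLpNorm_sub_sum).congr fun j => ?_
  rw [eLpNorm_sub_comm (V (k - j) - W (k - j))]
  refine eLpNorm_congr_ae (HasSumLp.unique le_rfl
    (fun _ => ((hX _).sub integrable_condExp).aestronglyMeasurable)
    ((hW _).sub (integrable_finsetSum' _ fun _ _ =>
      (hX _).sub integrable_condExp)).aestronglyMeasurable
    (integrable_condExp.sub ((hV _).sub (hW _))).aestronglyMeasurable
    (hW₁.sum_range_add (j + 1)) ?_)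
  have hidx : ∀ i : ℕ, k - ((j + 1 + i : ℕ) : ℤ) = k - j - (i + 1) := fun i => by push_cast; ring
  simpa only [hidx] using hasSumLp_condExp_sub_of_le hX (hV _) (hW _) (hVsum _) (hWsum _)
    (by omega : k - j ≤ k)

end Coboundary

theorem coboundary_tail_conditions_general
    {Ω : Type*} {m0 : MeasurableSpace Ω} {μ : Measure Ω} [IsProbabilityMeasure μ]
    (𝓕 : Filtration ℤ m0) (X V W : ℤ → Ω → ℝ)
    (hXint : ∀ i, Integrable (X i) μ)
    (hVint : ∀ k, Integrable (V k) μ)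
    (hWint : ∀ k, Integrable (W k) μ)
    (hV : ∀ k : ℤ,
      Tendsto (fun N : ℕ =>
        eLpNorm (fun ω =>
          (∑ i ∈ Finset.range N, (μ[X (k + i) | 𝓕 (k - 1)]) ω) - V k ω) 1 μ)
        atTop (𝓝 0))
    (hW : ∀ k : ℤ,
      Tendsto (fun N : ℕ =>
        eLpNorm (fun ω =>
          (∑ i ∈ Finset.range N,
            (X (k - (i + 1)) ω - (μ[X (k - (i + 1)) | 𝓕 (k - 1)]) ω)) - W k ω) 1 μ)
        atTop (𝓝 0))
    (U : ℤ → Ω → ℝ)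
    (hU : ∀ k, U k = fun ω => V k ω - W k ω) :
    ∀ k : ℤ,
      Tendsto (fun j : ℕ => eLpNorm (μ[U (k + j) | 𝓕 k]) 1 μ) atTop (𝓝 0) ∧
      Tendsto (fun j : ℕ =>
        eLpNorm (fun ω => U (k - j) ω - (μ[U (k - j) | 𝓕 k]) ω) 1 μ) atTop (𝓝 0) := by
  have hVsum : ∀ l, HasSumLp 1 μ (fun i : ℕ => μ[X (l + i) | 𝓕 (l - 1)]) (V l) := fun l => by
    simpa only [HasSumLp, Finset.sum_fn, Pi.sub_def] using hV l
  have hWsum : ∀ l,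
      HasSumLp 1 μ (fun i : ℕ => X (l - (i + 1)) - μ[X (l - (i + 1)) | 𝓕 (l - 1)]) (W l) :=
    fun l => by simpa only [HasSumLp, Finset.sum_fn, Pi.sub_def] using hW l
  have hU' : ∀ l, U l = V l - W l := hU
  intro k
  simp only [hU']
  exact ⟨tendsto_eLpNorm_condExp_add hXint hVint hWint hVsum hWsum k,
    tendsto_eLpNorm_sub_condExp_sub hXint hVint hWint hVsum hWsum k⟩

/-- Under the sufficiency hypotheses of Theorem 1 (the series `V_k` and `W_k`
converge in `L¹`), the functions `U_k = V_k - W_k` satisfy the tail conditions (2):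
for every `k`, `E(U_{k+j}|𝓕_k) → 0` and `U_{k-j} - E(U_{k-j}|𝓕_k) → 0` in `L¹`. -/
theorem coboundary_tail_conditions
    {Ω : Type*} {m0 : MeasurableSpace Ω} {μ : Measure Ω} [IsProbabilityMeasure μ]
    (𝓕 : Filtration ℤ m0) (X V W : ℤ → Ω → ℝ)
    (hXint : ∀ i, Integrable (X i) μ)
    (hXmeas : ∀ i, AEStronglyMeasurable[⨆ j, 𝓕 j] (X i) μ)
    (hXtail : ∀ i, μ[X i | ⨅ j, 𝓕 j] =ᵐ[μ] 0)
    (hVint : ∀ k, Integrable (V k) μ)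
    (hWint : ∀ k, Integrable (W k) μ)
    (hV : ∀ k : ℤ,
      Tendsto (fun N : ℕ =>
        eLpNorm (fun ω =>
          (∑ i ∈ Finset.range N, (μ[X (k + i) | 𝓕 (k - 1)]) ω) - V k ω) 1 μ)
        atTop (𝓝 0))
    (hW : ∀ k : ℤ,
      Tendsto (fun N : ℕ =>
        eLpNorm (fun ω =>
          (∑ i ∈ Finset.range N,
            (X (k - (i + 1)) ω - (μ[X (k - (i + 1)) | 𝓕 (k - 1)]) ω)) - W k ω) 1 μ)
        atTop (𝓝 0))
    (U : ℤ → Ω → ℝ)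
    (hU : ∀ k, U k = fun ω => V k ω - W k ω) :
    ∀ k : ℤ,
      Tendsto (fun j : ℕ => eLpNorm (μ[U (k + j) | 𝓕 k]) 1 μ) atTop (𝓝 0) ∧
      Tendsto (fun j : ℕ =>
        eLpNorm (fun ω => U (k - j) ω - (μ[U (k - j) | 𝓕 k]) ω) 1 μ) atTop (𝓝 0) :=
  coboundary_tail_conditions_general 𝓕 X V W hXint hVint hWint hV hW U hU
end HasSumLp
end

section
/- Let T be an invertible measure-preserving transformation of a probability space, M an invariant σ-algebra (M ⊂ T^{-1}M), and f ∈ L¹ with E(f | M_{-∞}) = 0 and f measurable with respect to M_∞, where M_{-∞} = ∩_i T^{-i}M and M_∞ = σ(∪_i T^{-i}M). Suppose the series Σ_{k≥0} E(f∘T^k | M) and Σ_{k≥0} [f∘T^{-k} − E(f∘T^{-k} | M)] converge in L¹. Then there exist m, g ∈ L¹ such that f = m + g − g∘T and (m∘T^i) is a martingale difference sequence adapted to (T^{-i}M), i.e. m is T^{-1}M-measurable and E(m | M) = 0. -/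
/-!
Put `g = V - E(f|M) - W + f`. Then `f - g + g ∘ T` is the sum of
`V ∘ T - V + E(f|M)` and `W - W ∘ T + (f - E(f|M)) ∘ T`, and each summand is `T⁻¹M`-measurable
with `E(·|M) = 0`. Everything rests on `E(E(h|M) ∘ T | M) = E(h ∘ T | M)`: it shifts the partial
sums of the first series, giving `E(V ∘ T | M) = V - E(f|M)`, and it kills `E(· | M)` of the terms
of the second series and of their compositions with `T`. Measurability passes to the `L¹` limits
because `L¹(T⁻¹M)` is closed in `L¹`; for the second summand the approximants are made
`T⁻¹M`-measurable by pairing the `N`-th partial sum with the `(N+1)`-st one composed with `T`,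
which telescopes since `T' ∘ T = id`.
-/

open MeasureTheory Filter Finset
open scoped ENNReal Topology

/-- The `i`-th iterate (`i ∈ ℤ`) of an invertible map `T` with inverse `T'`. -/
def zIter {Ω : Type*} (T T' : Ω → Ω) (i : ℤ) : Ω → Ω :=
  if 0 ≤ i then T^[i.toNat] else T'^[(-i).toNat]

section

variable {α E : Type*} {m m0 : MeasurableSpace α} {μ : Measure α}

lemma tendsto_eLpNorm_sub_sub [NormedAddCommGroup E] {u v : ℕ → α → E} {a b : α → E}
    (hu : ∀ N, AEStronglyMeasurable (u N - a) μ) (hv : ∀ N, AEStronglyMeasurable (v N - b) μ)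
    (hua : Tendsto (fun N => eLpNorm (u N - a) 1 μ) atTop (𝓝 0))
    (hvb : Tendsto (fun N => eLpNorm (v N - b) 1 μ) atTop (𝓝 0)) :
    Tendsto (fun N => eLpNorm (u N - v N - (a - b)) 1 μ) atTop (𝓝 0) := by
  refine tendsto_of_tendsto_of_tendsto_of_le_of_le tendsto_const_nhds
    (by simpa using hua.add hvb) (fun _ => zero_le) (fun N => ?_)
  rw [sub_sub_sub_comm]
  exact eLpNorm_sub_le (hu N) (hv N) le_rfl

lemma ae_eq_of_tendsto_eLpNorm [NormedAddCommGroup E] {u : ℕ → α → E} {a b : α → E}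
    (hu : ∀ N, AEStronglyMeasurable (u N) μ) (ha : AEStronglyMeasurable a μ)
    (hb : AEStronglyMeasurable b μ)
    (hua : Tendsto (fun N => eLpNorm (u N - a) 1 μ) atTop (𝓝 0))
    (hub : Tendsto (fun N => eLpNorm (u N - b) 1 μ) atTop (𝓝 0)) :
    a =ᵐ[μ] b :=
  tendstoInMeasure_ae_unique (tendstoInMeasure_of_tendsto_eLpNorm one_ne_zero hu ha hua)
    (tendstoInMeasure_of_tendsto_eLpNorm one_ne_zero hu hb hub)

lemma tendsto_eLpNorm_condExp_sub {u : ℕ → α → ℝ} {a : α → ℝ}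
    (hu : ∀ N, Integrable (u N) μ) (ha : Integrable a μ)
    (hua : Tendsto (fun N => eLpNorm (u N - a) 1 μ) atTop (𝓝 0)) :
    Tendsto (fun N => eLpNorm (μ[u N | m] - μ[a | m]) 1 μ) atTop (𝓝 0) := by
  refine tendsto_of_tendsto_of_tendsto_of_le_of_le tendsto_const_nhds hua
    (fun _ => zero_le) (fun N => ?_)
  calc eLpNorm (μ[u N | m] - μ[a | m]) 1 μ
      = eLpNorm (μ[u N - a | m]) 1 μ := eLpNorm_congr_ae (condExp_sub (hu N) ha m).symm
    _ ≤ eLpNorm (u N - a) 1 μ := eLpNorm_condExp_le_eLpNorm _ le_rfl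

lemma condExp_ae_eq_of_tendsto_eLpNorm {u : ℕ → α → ℝ} {a b : α → ℝ}
    (hu : ∀ N, Integrable (u N) μ) (ha : Integrable a μ) (hb : AEStronglyMeasurable b μ)
    (hua : Tendsto (fun N => eLpNorm (u N - a) 1 μ) atTop (𝓝 0))
    (hub : Tendsto (fun N => eLpNorm (μ[u N | m] - b) 1 μ) atTop (𝓝 0)) :
    μ[a | m] =ᵐ[μ] b :=
  ae_eq_of_tendsto_eLpNorm (fun _ => integrable_condExp.aestronglyMeasurable)
    integrable_condExp.aestronglyMeasurable hb (tendsto_eLpNorm_condExp_sub hu ha hua) hub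

lemma condExp_ae_eq_zero_of_tendsto_eLpNorm {u : ℕ → α → ℝ} {a : α → ℝ}
    (hu : ∀ N, Integrable (u N) μ) (ha : Integrable a μ)
    (hua : Tendsto (fun N => eLpNorm (u N - a) 1 μ) atTop (𝓝 0))
    (hu0 : ∀ N, μ[u N | m] =ᵐ[μ] 0) :
    μ[a | m] =ᵐ[μ] 0 :=
  condExp_ae_eq_of_tendsto_eLpNorm hu ha aestronglyMeasurable_const hua
    (tendsto_const_nhds.congr fun N => by simp [eLpNorm_congr_ae (hu0 N)])

lemma aestronglyMeasurable_of_tendsto_eLpNorm (hm : m ≤ m0) [SigmaFinite (μ.trim hm)]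
    {u : ℕ → α → ℝ} {a : α → ℝ} (hu_meas : ∀ N, AEStronglyMeasurable[m] (u N) μ)
    (hu : ∀ N, Integrable (u N) μ) (ha : Integrable a μ)
    (hua : Tendsto (fun N => eLpNorm (u N - a) 1 μ) atTop (𝓝 0)) :
    AEStronglyMeasurable[m] a μ := by
  have hfix : ∀ N, μ[u N | m] =ᵐ[μ] u N := fun N =>
    condExp_of_aestronglyMeasurable' hm (hu_meas N) (hu N)
  refine stronglyMeasurable_condExp.aestronglyMeasurable.congr
    (condExp_ae_eq_of_tendsto_eLpNorm hu ha ha.aestronglyMeasurable hua ?_)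
  exact hua.congr fun N => eLpNorm_congr_ae ((hfix N).sub EventuallyEq.rfl).symm

end

lemma tendsto_eLpNorm_comp_sub {α β E : Type*} {mα : MeasurableSpace α} {mβ : MeasurableSpace β}
    [NormedAddCommGroup E] {μ : Measure α} {ν : Measure β} {T : α → β}
    (hT : MeasurePreserving T μ ν) {u : ℕ → β → E} {a : β → E}
    (hu : ∀ N, AEStronglyMeasurable (u N - a) ν)
    (hua : Tendsto (fun N => eLpNorm (u N - a) 1 ν) atTop (𝓝 0)) :
    Tendsto (fun N => eLpNorm (u N ∘ T - a ∘ T) 1 μ) atTop (𝓝 0) :=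
  hua.congr fun N => (eLpNorm_comp_measurePreserving (hu N) hT).symm

lemma MeasureTheory.AEStronglyMeasurable.comp_comap {α β E : Type*} {mα : MeasurableSpace α}
    {M mβ : MeasurableSpace β} [TopologicalSpace E] {μ : Measure α} {ν : Measure β} {T : α → β}
    (hT : Measure.QuasiMeasurePreserving T μ ν) {h : β → E}
    (hh : AEStronglyMeasurable[M] h ν) :
    AEStronglyMeasurable[M.comap T] (h ∘ T) μ :=
  ⟨hh.mk h ∘ T, hh.stronglyMeasurable_mk.comp_measurable (comap_measurable T),
    hT.ae_eq_comp hh.ae_eq_mk⟩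

lemma Measurable.comap_le_of_le {α β : Type*} {mα : MeasurableSpace α}
    {M mβ : MeasurableSpace β} {T : α → β} (hT : Measurable T) (hM : M ≤ mβ) :
    M.comap T ≤ mα :=
  (MeasurableSpace.comap_mono hM).trans hT.comap_le

lemma sum_range_iterate_sub_comp {α : Type*} {T T' : α → α} (hinv : Function.LeftInverse T' T)
    (f : α → ℝ) (c : ℕ → α → ℝ) (N : ℕ) :
    ∑ k ∈ range N, (f ∘ T'^[k] - c k) - (∑ k ∈ range (N + 1), (f ∘ T'^[k] - c k)) ∘ T
      + (f - c 0) ∘ T = ∑ k ∈ range N, (c (k + 1) ∘ T - c k) := by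
  ext ω
  simp only [Pi.add_apply, Pi.sub_apply, Function.comp_apply, Finset.sum_apply,
    sum_range_succ', Function.iterate_succ_apply, hinv ω, Function.iterate_zero,
    Function.comp_id, Finset.sum_sub_distrib]
  ring

-- `(d ∘ T^i)_{i ∈ ℤ}` is then a martingale difference sequence adapted to `(T^{-i} M)_{i ∈ ℤ}`.
def IsMartingaleDifference {α : Type*} {m0 : MeasurableSpace α} (μ : Measure α)
    (M : MeasurableSpace α) (T : α → α) (d : α → ℝ) : Prop :=
  Integrable d μ ∧ AEStronglyMeasurable[M.comap T] d μ ∧ μ[d | M] =ᵐ[μ] 0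

section

variable {α : Type*} {M m0 : MeasurableSpace α} {μ : Measure α} {T : α → α}

lemma IsMartingaleDifference.add {d₁ d₂ : α → ℝ} (h₁ : IsMartingaleDifference μ M T d₁)
    (h₂ : IsMartingaleDifference μ M T d₂) : IsMartingaleDifference μ M T (d₁ + d₂) := by
  refine ⟨h₁.1.add h₂.1, h₁.2.1.add h₂.2.1, (condExp_add h₁.1 h₂.1 M).trans ?_⟩
  filter_upwards [h₁.2.2, h₂.2.2] with ω h₁ω h₂ω
  simp [h₁ω, h₂ω]

variable [IsFiniteMeasure μ]

lemma condExp_comp_ae_eq (hT : MeasurePreserving T μ μ) (hM : M ≤ m0) {h : α → ℝ}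
    (hh : Integrable h μ) :
    μ[h | M] ∘ T =ᵐ[μ] μ[h ∘ T | M.comap T] := by
  refine ae_eq_condExp_of_forall_setIntegral_eq (hT.measurable.comap_le_of_le hM)
    (hT.integrable_comp_of_integrable hh)
    (fun s _ _ => (hT.integrable_comp_of_integrable integrable_condExp).integrableOn) ?_
    (stronglyMeasurable_condExp.comp_measurable (comap_measurable T)).aestronglyMeasurable
  rintro - ⟨s, hs, rfl⟩ -
  have hs0 : MeasurableSet s := hM s hs
  have hpre : ∀ g : α → ℝ, AEStronglyMeasurable g μ →
      ∫ x in T ⁻¹' s, g (T x) ∂μ = ∫ x in s, g x ∂μ := fun g hg => by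
    rw [← setIntegral_map hs0 (by rwa [hT.map_eq]) hT.aemeasurable, hT.map_eq]
  simp only [Function.comp_apply]
  rw [hpre _ integrable_condExp.aestronglyMeasurable, hpre _ hh.aestronglyMeasurable,
    setIntegral_condExp hM hh hs]

lemma condExp_condExp_comp (hT : MeasurePreserving T μ μ) (hM : M ≤ m0)
    (hMinv : M ≤ M.comap T) {h : α → ℝ} (hh : Integrable h μ) :
    μ[μ[h | M] ∘ T | M] =ᵐ[μ] μ[h ∘ T | M] :=
  (condExp_congr_ae (condExp_comp_ae_eq hT hM hh)).trans
    (condExp_condExp_of_le hMinv (hT.measurable.comap_le_of_le hM))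

lemma condExp_sub_condExp (hM : M ≤ m0) {h : α → ℝ} (hh : Integrable h μ) :
    μ[h - μ[h | M] | M] =ᵐ[μ] 0 := by
  filter_upwards [condExp_sub hh (integrable_condExp (m := M) (f := h)) M,
    condExp_condExp_of_le (f := h) le_rfl hM] with ω h₁ h₂
  rw [h₁, Pi.sub_apply, h₂, sub_self, Pi.zero_apply]

lemma condExp_sub_condExp_comp (hT : MeasurePreserving T μ μ) (hM : M ≤ m0)
    (hMinv : M ≤ M.comap T) {h : α → ℝ} (hh : Integrable h μ) :
    μ[(h - μ[h | M]) ∘ T | M] =ᵐ[μ] 0 := by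
  filter_upwards [condExp_sub (hT.integrable_comp_of_integrable hh)
      (hT.integrable_comp_of_integrable (integrable_condExp (m := M) (f := h))) M,
    condExp_condExp_comp hT hM hMinv hh] with ω h₁ h₂
  rw [Pi.sub_comp, h₁, Pi.sub_apply, h₂, sub_self, Pi.zero_apply]

lemma condExp_sum_sub_condExp (hM : M ≤ m0) {ι : Type*} (s : Finset ι) {g : ι → α → ℝ}
    (hg : ∀ i ∈ s, Integrable (g i) μ) :
    μ[∑ i ∈ s, (g i - μ[g i | M]) | M] =ᵐ[μ] 0 :=
  (condExp_finsetSum (fun i hi => (hg i hi).sub integrable_condExp) M).trans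
    ((eventuallyEq_sum fun i hi => condExp_sub_condExp hM (hg i hi)).trans (by simp))

lemma condExp_sum_sub_condExp_comp (hT : MeasurePreserving T μ μ) (hM : M ≤ m0)
    (hMinv : M ≤ M.comap T) {ι : Type*} (s : Finset ι) {g : ι → α → ℝ}
    (hg : ∀ i ∈ s, Integrable (g i) μ) :
    μ[(∑ i ∈ s, (g i - μ[g i | M])) ∘ T | M] =ᵐ[μ] 0 := by
  have hsum_comp : (∑ i ∈ s, (g i - μ[g i | M])) ∘ T = ∑ i ∈ s, (g i - μ[g i | M]) ∘ T := by
    ext ω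
    simp only [Function.comp_apply, Finset.sum_apply]
  rw [hsum_comp]
  exact (condExp_finsetSum (fun i hi =>
      hT.integrable_comp_of_integrable ((hg i hi).sub integrable_condExp)) M).trans
    ((eventuallyEq_sum fun i hi => condExp_sub_condExp_comp hT hM hMinv (hg i hi)).trans
      (by simp))

lemma condExp_comp_ae_eq_of_tendsto_sum_condExp_iterate (hT : MeasurePreserving T μ μ)
    (hM : M ≤ m0) (hMinv : M ≤ M.comap T) {f V : α → ℝ} (hf : Integrable f μ)
    (hV : Integrable V μ)
    (hlim : Tendsto (fun N => eLpNorm (∑ k ∈ range N, μ[f ∘ T^[k] | M] - V) 1 μ) atTop (𝓝 0)) :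
    μ[V ∘ T | M] =ᵐ[μ] V - μ[f | M] := by
  set S : ℕ → α → ℝ := fun N => ∑ k ∈ range N, μ[f ∘ T^[k] | M]
  have hS_int : ∀ N, Integrable (S N) μ := fun N =>
    integrable_finsetSum' _ fun k _ => integrable_condExp
  have hshift : ∀ N, μ[S N ∘ T | M] =ᵐ[μ] S (N + 1) - μ[f | M] := by
    intro N
    have hST : S N ∘ T = ∑ k ∈ range N, μ[f ∘ T^[k] | M] ∘ T := by
      ext ω
      simp [S, Finset.sum_apply]
    rw [hST]
    refine (condExp_finsetSum (fun k _ => hT.integrable_comp_of_integrable integrable_condExp)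
      M).trans ((eventuallyEq_sum fun k _ => condExp_condExp_comp hT hM hMinv
        ((hT.iterate k).integrable_comp_of_integrable hf)).trans (EventuallyEq.of_eq ?_))
    simp only [S, sum_range_succ', Function.iterate_zero, Function.comp_id, Function.comp_assoc,
      ← Function.iterate_succ]
    abel
  refine condExp_ae_eq_of_tendsto_eLpNorm (fun N => hT.integrable_comp_of_integrable (hS_int N))
    (hT.integrable_comp_of_integrable hV) (hV.sub integrable_condExp).aestronglyMeasurable
    (tendsto_eLpNorm_comp_sub hT (fun N => ((hS_int N).sub hV).aestronglyMeasurable) hlim)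
    ((hlim.comp (tendsto_add_atTop_nat 1)).congr fun N => eLpNorm_congr_ae ?_)
  filter_upwards [hshift N] with ω hω
  simp [hω, S]

lemma isMartingaleDifference_comp_sub_add_condExp (hT : MeasurePreserving T μ μ)
    (hM : M ≤ m0) (hMinv : M ≤ M.comap T) {f V : α → ℝ} (hf : Integrable f μ)
    (hV : Integrable V μ)
    (hlim : Tendsto (fun N => eLpNorm (∑ k ∈ range N, μ[f ∘ T^[k] | M] - V) 1 μ) atTop (𝓝 0)) :
    IsMartingaleDifference μ M T (V ∘ T - V + μ[f | M]) := by
  have hVM : AEStronglyMeasurable[M] V μ :=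
    aestronglyMeasurable_of_tendsto_eLpNorm hM (fun N => (Finset.stronglyMeasurable_sum _
      fun k _ => stronglyMeasurable_condExp).aestronglyMeasurable)
      (fun N => integrable_finsetSum' _ fun k _ => integrable_condExp) hV hlim
  have hVT := hT.integrable_comp_of_integrable hV
  refine ⟨(hVT.sub hV).add integrable_condExp,
    ((hVM.comp_comap hT.quasiMeasurePreserving).sub (hVM.mono hMinv)).add
      (stronglyMeasurable_condExp.mono hMinv).aestronglyMeasurable, ?_⟩
  filter_upwards [condExp_add (hVT.sub hV) (integrable_condExp (m := M) (f := f)) M,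
    condExp_sub hVT hV M,
    condExp_comp_ae_eq_of_tendsto_sum_condExp_iterate hT hM hMinv hf hV hlim,
    condExp_of_aestronglyMeasurable' hM hVM hV, condExp_condExp_of_le (f := f) le_rfl hM]
    with ω h₁ h₂ h₃ h₄ h₅
  simp [h₁, h₂, h₃, h₄, h₅]

lemma aestronglyMeasurable_comap_sub_comp_add_comp (hT : MeasurePreserving T μ μ) {T' : α → α}
    (hT' : MeasurePreserving T' μ μ) (hinv : Function.LeftInverse T' T) (hM : M ≤ m0)
    (hMinv : M ≤ M.comap T) {f W : α → ℝ} (hf : Integrable f μ) (hW : Integrable W μ)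
    (hlim : Tendsto (fun N => eLpNorm (∑ k ∈ range N, (f ∘ T'^[k] - μ[f ∘ T'^[k] | M]) - W) 1 μ)
      atTop (𝓝 0)) :
    AEStronglyMeasurable[M.comap T] (W - W ∘ T + (f - μ[f | M]) ∘ T) μ := by
  set R : ℕ → α → ℝ := fun N => ∑ k ∈ range N, (f ∘ T'^[k] - μ[f ∘ T'^[k] | M]) with hR
  have hR_int : ∀ N, Integrable (R N) μ := fun N => integrable_finsetSum' _ fun k _ =>
    ((hT'.iterate k).integrable_comp_of_integrable hf).sub integrable_condExp
  have hR_sub : ∀ N, AEStronglyMeasurable (R N - W) μ := fun N =>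
    ((hR_int N).sub hW).aestronglyMeasurable
  have hd : Integrable ((f - μ[f | M]) ∘ T) μ :=
    hT.integrable_comp_of_integrable (hf.sub integrable_condExp)
  have hlim_succ : Tendsto (fun N => eLpNorm (R (N + 1) - W) 1 μ) atTop (𝓝 0) :=
    hlim.comp (tendsto_add_atTop_nat 1)
  refine aestronglyMeasurable_of_tendsto_eLpNorm (hT.measurable.comap_le_of_le hM)
    (u := fun N => R N - R (N + 1) ∘ T + (f - μ[f | M]) ∘ T) (fun N => ?_)
    (fun N => ((hR_int N).sub (hT.integrable_comp_of_integrable (hR_int (N + 1)))).add hd)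
    ((hW.sub (hT.integrable_comp_of_integrable hW)).add hd) ?_
  · have htelescope := sum_range_iterate_sub_comp hinv f (fun k => μ[f ∘ T'^[k] | M]) N
    simp only [Function.iterate_zero, Function.comp_id] at htelescope
    simp only [hR]
    rw [htelescope]
    exact (Finset.stronglyMeasurable_sum _ fun k _ =>
      (stronglyMeasurable_condExp.comp_measurable (comap_measurable T)).sub
        (stronglyMeasurable_condExp.mono hMinv)).aestronglyMeasurable
  · refine (tendsto_eLpNorm_sub_sub hR_sub
      (fun N => (hT.integrable_comp_of_integrable ((hR_int (N + 1)).sub hW)).aestronglyMeasurable)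
      hlim (tendsto_eLpNorm_comp_sub hT (fun N => hR_sub (N + 1)) hlim_succ)).congr fun N => ?_
    rw [add_sub_add_right_eq_sub]
    rfl

lemma isMartingaleDifference_sub_comp_add_comp (hT : MeasurePreserving T μ μ) {T' : α → α}
    (hT' : MeasurePreserving T' μ μ) (hinv : Function.LeftInverse T' T) (hM : M ≤ m0)
    (hMinv : M ≤ M.comap T) {f W : α → ℝ} (hf : Integrable f μ) (hW : Integrable W μ)
    (hlim : Tendsto (fun N => eLpNorm (∑ k ∈ range N, (f ∘ T'^[k] - μ[f ∘ T'^[k] | M]) - W) 1 μ)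
      atTop (𝓝 0)) :
    IsMartingaleDifference μ M T (W - W ∘ T + (f - μ[f | M]) ∘ T) := by
  have hfk : ∀ k, Integrable (f ∘ T'^[k]) μ := fun k =>
    (hT'.iterate k).integrable_comp_of_integrable hf
  have hWT := hT.integrable_comp_of_integrable hW
  have hd : Integrable ((f - μ[f | M]) ∘ T) μ :=
    hT.integrable_comp_of_integrable (hf.sub integrable_condExp)
  have hR_int : ∀ N, Integrable (∑ k ∈ range N, (f ∘ T'^[k] - μ[f ∘ T'^[k] | M])) μ :=
    fun N => integrable_finsetSum' _ fun k _ => (hfk k).sub integrable_condExp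
  have hQW : μ[W | M] =ᵐ[μ] 0 := condExp_ae_eq_zero_of_tendsto_eLpNorm hR_int hW hlim
    (fun N => condExp_sum_sub_condExp hM _ fun k _ => hfk k)
  have hQWT : μ[W ∘ T | M] =ᵐ[μ] 0 := condExp_ae_eq_zero_of_tendsto_eLpNorm
    (fun N => hT.integrable_comp_of_integrable (hR_int N)) hWT
    (tendsto_eLpNorm_comp_sub hT (fun N => ((hR_int N).sub hW).aestronglyMeasurable) hlim)
    (fun N => condExp_sum_sub_condExp_comp hT hM hMinv _ fun k _ => hfk k)
  refine ⟨(hW.sub hWT).add hd,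
    aestronglyMeasurable_comap_sub_comp_add_comp hT hT' hinv hM hMinv hf hW hlim, ?_⟩
  filter_upwards [condExp_add (hW.sub hWT) hd M, condExp_sub hW hWT M, hQW, hQWT,
    condExp_sub_condExp_comp hT hM hMinv hf] with ω h₁ h₂ h₃ h₄ h₅
  simp [h₁, h₂, h₃, h₄, h₅]

end

theorem stationary_martingale_coboundary_sufficiency_general
    {Ω : Type*} {m0 : MeasurableSpace Ω} {μ : Measure Ω} [IsProbabilityMeasure μ]
    (T T' : Ω → Ω) (hT : MeasurePreserving T μ μ) (hT' : MeasurePreserving T' μ μ)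
    (hinv₁ : Function.LeftInverse T' T)
    (M : MeasurableSpace Ω) (hM : M ≤ m0)
    (hMinv : M ≤ MeasurableSpace.comap T M)
    (f : Ω → ℝ) (hf : Integrable f μ)
    (hser1 : ∃ V : Ω → ℝ, Integrable V μ ∧
      Tendsto (fun N : ℕ =>
        eLpNorm (fun ω => (∑ k ∈ Finset.range N, (μ[f ∘ T^[k] | M]) ω) - V ω) 1 μ)
        atTop (𝓝 0))
    (hser2 : ∃ W : Ω → ℝ, Integrable W μ ∧
      Tendsto (fun N : ℕ =>
        eLpNorm (fun ω =>
          (∑ k ∈ Finset.range N, (f (T'^[k] ω) - (μ[f ∘ T'^[k] | M]) ω)) - W ω) 1 μ)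
        atTop (𝓝 0)) :
    ∃ m g : Ω → ℝ, Integrable m μ ∧ Integrable g μ ∧
      (f =ᵐ[μ] fun ω => m ω + g ω - g (T ω)) ∧
      AEStronglyMeasurable[MeasurableSpace.comap T M] m μ ∧
      μ[m | M] =ᵐ[μ] 0 := by
  obtain ⟨V, hV, hVlim⟩ := hser1
  obtain ⟨W, hW, hWlim⟩ := hser2
  have hforward := isMartingaleDifference_comp_sub_add_condExp hT hM hMinv hf hV
    (by simpa only [← Finset.sum_apply, ← Pi.sub_apply] using hVlim)
  have hbackward := isMartingaleDifference_sub_comp_add_comp hT hT' hinv₁ hM hMinv hf hW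
    (by simpa only [← Finset.sum_apply, ← Function.comp_apply (f := f), ← Pi.sub_apply]
      using hWlim)
  obtain ⟨hm_int, hm_meas, hm_condExp⟩ := hforward.add hbackward
  refine ⟨_, V - μ[f | M] - W + f, hm_int, ((hV.sub integrable_condExp).sub hW).add hf,
    ?_, hm_meas, hm_condExp⟩
  filter_upwards with ω
  simp only [Pi.add_apply, Pi.sub_apply, Function.comp_apply]
  ring

/-- Corollary 2, sufficiency: if `Σ_{k≥0} E(f∘T^k|M)` and
`Σ_{k≥0}[f∘T^{-k} - E(f∘T^{-k}|M)]` converge in `L¹` (with `f ∈ L¹`,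
`E(f|M_{-∞}) = 0`, `f` being `M_∞`-measurable), then `f = m + g - g∘T` with
`m, g ∈ L¹`, `m` being `T⁻¹M`-measurable and `E(m|M) = 0`, i.e. `(m∘T^i)` is a
martingale difference sequence for the filtration `(T^{-i}M)`. -/
theorem stationary_martingale_coboundary_sufficiency
    {Ω : Type*} {m0 : MeasurableSpace Ω} {μ : Measure Ω} [IsProbabilityMeasure μ]
    (T T' : Ω → Ω) (hT : MeasurePreserving T μ μ) (hT' : MeasurePreserving T' μ μ)
    (hinv₁ : Function.LeftInverse T' T) (hinv₂ : Function.RightInverse T' T)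
    (M : MeasurableSpace Ω) (hM : M ≤ m0)
    (hMinv : M ≤ MeasurableSpace.comap T M)
    (f : Ω → ℝ) (hf : Integrable f μ)
    (hfmeas : AEStronglyMeasurable[⨆ i : ℤ, MeasurableSpace.comap (zIter T T' i) M] f μ)
    (hftail : μ[f | ⨅ i : ℤ, MeasurableSpace.comap (zIter T T' i) M] =ᵐ[μ] 0)
    (hser1 : ∃ V : Ω → ℝ, Integrable V μ ∧
      Tendsto (fun N : ℕ =>
        eLpNorm (fun ω => (∑ k ∈ Finset.range N, (μ[f ∘ T^[k] | M]) ω) - V ω) 1 μ)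
        atTop (𝓝 0))
    (hser2 : ∃ W : Ω → ℝ, Integrable W μ ∧
      Tendsto (fun N : ℕ =>
        eLpNorm (fun ω =>
          (∑ k ∈ Finset.range N, (f (T'^[k] ω) - (μ[f ∘ T'^[k] | M]) ω)) - W ω) 1 μ)
        atTop (𝓝 0)) :
    ∃ m g : Ω → ℝ, Integrable m μ ∧ Integrable g μ ∧
      (f =ᵐ[μ] fun ω => m ω + g ω - g (T ω)) ∧
      AEStronglyMeasurable[MeasurableSpace.comap T M] m μ ∧
      μ[m | M] =ᵐ[μ] 0 :=
  stationary_martingale_coboundary_sufficiency_general T T' hT hT' hinv₁ M hM hMinv f hf hser1 hser2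
end

section
/- There exists a probability space, a decreasing sequence of σ-algebras (F_n)_{n≥1}, and a random variable X with E(e^{|X|}) < ∞ (so X belongs to the Orlicz space L_ψ with ψ(x) = e^{|x|} − 1) such that E(X | F_n) → 0 almost surely, yet the Orlicz norm ‖E(X | F_n)‖_ψ ≥ 1 for all n; i.e., the backward martingale convergence theorem fails in the Orlicz space L_ψ. -/
/-!
Take `Ω = ℤ` with the symmetric law `P{z} ∝ e^{-|z|} / (|z| + 1)²` and `X z = z`, so that
`E e^{|X|} ∝ ∑ (|z| + 1)⁻² < ∞`. In `F_n` the block `{|z| < n}` is one atom and every other point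
is an atom. Since `X` is odd and the law symmetric, `E(X | F_n) = X · 1_{|X| ≥ n}`, which vanishes
at each fixed `z` as soon as `n > |z|`. On the tail, however, `P{z} e^{|z|/c} ∝
e^{(1/c - 1)|z|} / (|z| + 1)²` is unbounded for every `c < 1`, so `E e^{|E(X | F_n)|/c} = ∞`
and `‖E(X | F_n)‖_ψ ≥ 1`.
-/

open MeasureTheory Filter
open scoped ENNReal Topology

/-- The Orlicz (Luxemburg) norm associated with the Young function
`ψ(x) = e^{|x|} - 1`: `‖f‖_ψ = inf {c > 0 : E e^{|f|/c} ≤ 2}`. -/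
noncomputable def expOrliczNorm {Ω : Type*} [MeasurableSpace Ω] (μ : Measure Ω)
    (f : Ω → ℝ) : ℝ :=
  sInf {c : ℝ | 0 < c ∧ ∫⁻ ω, ENNReal.ofReal (Real.exp (|f ω| / c)) ∂μ ≤ 2}

lemma Real.exp_mul_le_one_sub_add_mul_exp {t : ℝ} (ht0 : 0 ≤ t) (ht1 : t ≤ 1) (x : ℝ) :
    Real.exp (t * x) ≤ 1 - t + t * Real.exp x := by
  have h := convexOn_exp.2 (Set.mem_univ x) (Set.mem_univ 0) ht0 (sub_nonneg.2 ht1) (by ring)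
  simpa [add_comm] using h

theorem integral_eq_zero_of_odd {G E : Type*} [MeasurableSpace G] [AddGroup G] [MeasurableNeg G]
    [NormedAddCommGroup E] [NormedSpace ℝ E] {μ : Measure G} [μ.IsNegInvariant] {f : G → E}
    (hf : ∀ x, f (-x) = -f x) : ∫ x, f x ∂μ = 0 := by
  have h := integral_neg_eq_self f μ
  simp only [hf, integral_neg] at h
  rw [neg_eq_iff_add_eq_zero, ← two_smul ℝ] at h
  exact (smul_eq_zero.1 h).resolve_left two_ne_zero

section ExpOrlicz

variable {Ω : Type*} [MeasurableSpace Ω] {μ : Measure Ω} {f g : Ω → ℝ}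

theorem expOrliczNorm_congr_ae (h : f =ᵐ[μ] g) : expOrliczNorm μ f = expOrliczNorm μ g := by
  have h_eq (c : ℝ) : ∫⁻ ω, ENNReal.ofReal (Real.exp (|f ω| / c)) ∂μ =
      ∫⁻ ω, ENNReal.ofReal (Real.exp (|g ω| / c)) ∂μ :=
    lintegral_congr_ae (h.mono fun ω hω => by simp only [hω])
  simp only [expOrliczNorm, h_eq]

theorem integrable_of_lintegral_exp_abs_ne_top (hm : AEStronglyMeasurable f μ)
    (hf : ∫⁻ ω, ENNReal.ofReal (Real.exp |f ω|) ∂μ ≠ ∞) : Integrable f μ := by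
  refine ⟨hm, hasFiniteIntegral_iff_norm f |>.2 <| lt_of_le_of_lt ?_ hf.lt_top⟩
  refine lintegral_mono fun ω => ENNReal.ofReal_le_ofReal ?_
  linarith [Real.add_one_le_exp |f ω|, Real.norm_eq_abs (f ω)]

variable [IsProbabilityMeasure μ]

theorem exists_lintegral_exp_abs_div_le_two
    (hf : ∫⁻ ω, ENNReal.ofReal (Real.exp |f ω|) ∂μ ≠ ∞) :
    ∃ c > 0, ∫⁻ ω, ENNReal.ofReal (Real.exp (|f ω| / c)) ∂μ ≤ 2 := by
  set A := ∫⁻ ω, ENNReal.ofReal (Real.exp |f ω|) ∂μ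
  set t := (A.toReal + 1)⁻¹
  have ht0 : 0 < t := by positivity
  have ht1 : t ≤ 1 := inv_le_one_of_one_le₀ (by linarith [A.toReal_nonneg])
  have htA : ENNReal.ofReal t * A ≤ 1 := by
    rw [← ENNReal.ofReal_toReal hf, ← ENNReal.ofReal_mul ht0.le]
    refine ENNReal.ofReal_le_one.2 ?_
    rw [inv_mul_le_one₀ (by positivity)]
    linarith
  refine ⟨t⁻¹, inv_pos.2 ht0, ?_⟩
  calc ∫⁻ ω, ENNReal.ofReal (Real.exp (|f ω| / t⁻¹)) ∂μ
      ≤ ∫⁻ ω, ENNReal.ofReal (1 - t) + ENNReal.ofReal t * ENNReal.ofReal (Real.exp |f ω|) ∂μ := by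
        refine lintegral_mono fun ω => ?_
        rw [← ENNReal.ofReal_mul ht0.le, ← ENNReal.ofReal_add (by linarith) (by positivity),
          div_inv_eq_mul, mul_comm]
        exact ENNReal.ofReal_le_ofReal (Real.exp_mul_le_one_sub_add_mul_exp ht0.le ht1 _)
    _ = ENNReal.ofReal (1 - t) + ENNReal.ofReal t * A := by
        rw [lintegral_add_left measurable_const, lintegral_const, measure_univ, mul_one,
          lintegral_const_mul' _ _ ENNReal.ofReal_ne_top]
    _ ≤ 1 + 1 := add_le_add (ENNReal.ofReal_le_one.2 (by linarith)) htA
    _ = 2 := one_add_one_eq_two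

theorem one_le_expOrliczNorm (hf : ∫⁻ ω, ENNReal.ofReal (Real.exp |f ω|) ∂μ ≠ ∞)
    (h_top : ∀ c, 0 < c → c < 1 → ∫⁻ ω, ENNReal.ofReal (Real.exp (|f ω| / c)) ∂μ = ∞) :
    1 ≤ expOrliczNorm μ f := by
  obtain ⟨c, hc0, hc⟩ := exists_lintegral_exp_abs_div_le_two hf
  refine le_csInf ⟨c, hc0, hc⟩ fun b ⟨hb0, hb⟩ => ?_
  by_contra! hb1
  rw [h_top b hb0 hb1, top_le_iff] at hb
  exact ENNReal.ofNat_ne_top hb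

end ExpOrlicz

namespace OrliczCounterexample

def collapse (n : ℕ) (z : ℤ) : ℤ := if z.natAbs < n then 0 else z

variable {n m : ℕ} {z : ℤ}

lemma collapse_of_lt (h : z.natAbs < n) : collapse n z = 0 := if_pos h

lemma collapse_of_le (h : n ≤ z.natAbs) : collapse n z = z := if_neg h.not_gt

lemma collapse_collapse (h : n ≤ m) (z : ℤ) : collapse m (collapse n z) = collapse m z := by
  rcases lt_or_ge z.natAbs n with hz | hz
  · rw [collapse_of_lt hz, collapse_of_lt (hz.trans_le h), collapse_of_lt (by simp; omega)]
  · rw [collapse_of_le hz]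

lemma abs_comp_collapse_le {f : ℤ → ℝ} (hf0 : f 0 = 0) (n : ℕ) (z : ℤ) :
    |f (collapse n z)| ≤ |f z| := by
  rcases lt_or_ge z.natAbs n with hz | hz
  · simp [collapse_of_lt hz, hf0]
  · rw [collapse_of_le hz]

abbrev tailSigma (n : ℕ) : MeasurableSpace ℤ := MeasurableSpace.comap (collapse n) ⊤

lemma tailSigma_antitone : Antitone tailSigma := fun n m h => by
  change MeasurableSpace.comap (collapse m) ⊤ ≤ MeasurableSpace.comap (collapse n) ⊤
  rw [← funext (collapse_collapse h), ← Function.comp_def, ← MeasurableSpace.comap_comp]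
  exact MeasurableSpace.comap_mono le_top

theorem condExp_tailSigma_ae_eq {μ : Measure ℤ} [IsFiniteMeasure μ] [μ.IsNegInvariant]
    {f : ℤ → ℝ} (hf : Integrable f μ) (hf_odd : ∀ z, f (-z) = -f z) (n : ℕ) :
    μ[f | tailSigma n] =ᵐ[μ] f ∘ collapse n := by
  have hf0 : f 0 = 0 := self_eq_neg.1 (by simpa using hf_odd 0)
  have h_int : Integrable (f ∘ collapse n) μ :=
    hf.mono Measurable.of_discrete.aestronglyMeasurable
      (ae_of_all _ fun z => abs_comp_collapse_le hf0 n z)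
  refine (ae_eq_condExp_of_forall_setIntegral_eq le_top hf (fun _ _ _ => h_int.integrableOn)
    ?_ ?_).symm
  · rintro _ ⟨t, -, rfl⟩ -
    rw [← sub_eq_zero, ← integral_sub h_int.integrableOn hf.integrableOn,
      ← integral_indicator (MeasurableSet.of_discrete)]
    -- `f ∘ collapse n - f` is odd and supported on the block, which `collapse n ⁻¹' t` either
    -- contains or misses; so its indicator on that set is still odd.
    refine integral_eq_zero_of_odd fun z => ?_
    rcases lt_or_ge z.natAbs n with hz | hz
    · have hz' : (-z).natAbs < n := by simpa using hz
      have h_mem : -z ∈ collapse n ⁻¹' t ↔ z ∈ collapse n ⁻¹' t := by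
        simp [collapse_of_lt hz, collapse_of_lt hz']
      classical
      simp only [Set.indicator_apply, h_mem]
      split_ifs <;> simp [collapse_of_lt hz, collapse_of_lt hz', hf_odd, hf0]
    · have hz' : n ≤ (-z).natAbs := by simpa using hz
      simp [Set.indicator, collapse_of_le hz, collapse_of_le hz']
  · exact (Measurable.of_discrete.comp (comap_measurable (collapse n))).aestronglyMeasurable

noncomputable def weight (z : ℤ) : ℝ≥0∞ :=
  ENNReal.ofReal (Real.exp (-|(z : ℝ)|) / (|(z : ℝ)| + 1) ^ 2)

lemma weight_mul_ofReal_exp (z : ℤ) (b : ℝ) :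
    weight z * ENNReal.ofReal (Real.exp (b * |(z : ℝ)|)) =
      ENNReal.ofReal (Real.exp ((b - 1) * |(z : ℝ)|) / (|(z : ℝ)| + 1) ^ 2) := by
  rw [weight, ← ENNReal.ofReal_mul (by positivity), div_mul_eq_mul_div, ← Real.exp_add]
  ring_nf

lemma weight_le (z : ℤ) : weight z ≤ ENNReal.ofReal (1 / (|(z : ℝ)| + 1) ^ 2) := by
  refine ENNReal.ofReal_le_ofReal (div_le_div_of_nonneg_right ?_ (by positivity))
  exact Real.exp_le_one_iff.2 (neg_nonpos.2 (abs_nonneg _))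

lemma weight_neg (z : ℤ) : weight (-z) = weight z := by
  simp [weight]

lemma tsum_ofReal_one_div_abs_add_one_sq_ne_top :
    ∑' z : ℤ, ENNReal.ofReal (1 / (|(z : ℝ)| + 1) ^ 2) ≠ ∞ := by
  have h_nat : Summable fun k : ℕ => 1 / ((k : ℝ) + 1) ^ 2 := by
    simpa using (summable_nat_add_iff 1).2 (Real.summable_one_div_nat_pow.2 one_lt_two)
  have h : Summable fun z : ℤ => 1 / (|(z : ℝ)| + 1) ^ 2 :=
    summable_int_iff_summable_nat_and_neg.2 ⟨by simpa using h_nat, by simpa using h_nat⟩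
  rw [← ENNReal.ofReal_tsum_of_nonneg (fun _ => by positivity) h]
  exact ENNReal.ofReal_ne_top

lemma tsum_weight_ne_top : ∑' z, weight z ≠ ∞ :=
  ne_top_of_le_ne_top tsum_ofReal_one_div_abs_add_one_sq_ne_top (ENNReal.tsum_le_tsum weight_le)

lemma tsum_weight_ne_zero : ∑' z, weight z ≠ 0 := fun h => by
  simpa [weight] using ENNReal.tsum_eq_zero.1 h 0

noncomputable def weightMeasure : Measure ℤ :=
  (PMF.normalize weight tsum_weight_ne_zero tsum_weight_ne_top).toMeasure

instance : IsProbabilityMeasure weightMeasure := PMF.toMeasure.isProbabilityMeasure _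

lemma weightMeasure_singleton (z : ℤ) : weightMeasure {z} = weight z * (∑' z, weight z)⁻¹ :=
  PMF.toMeasure_apply_singleton _ _ (MeasurableSet.of_discrete)

lemma lintegral_weightMeasure (f : ℤ → ℝ≥0∞) :
    ∫⁻ z, f z ∂weightMeasure = (∑' z, weight z)⁻¹ * ∑' z, weight z * f z := by
  simp only [lintegral_countable', weightMeasure_singleton, ← ENNReal.tsum_mul_left]
  congr 1 with z
  ring

instance : weightMeasure.IsNegInvariant := by
  refine ⟨Measure.ext_of_singleton fun z => ?_⟩
  rw [Measure.neg, Measure.map_apply measurable_neg MeasurableSet.of_discrete,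
    Set.neg_preimage, Set.neg_singleton, weightMeasure_singleton, weightMeasure_singleton,
    weight_neg]

lemma lintegral_exp_abs_lt_top :
    ∫⁻ z, ENNReal.ofReal (Real.exp |(z : ℝ)|) ∂weightMeasure < ∞ := by
  have h (z : ℤ) : weight z * ENNReal.ofReal (Real.exp |(z : ℝ)|) =
      ENNReal.ofReal (1 / (|(z : ℝ)| + 1) ^ 2) := by
    simpa using weight_mul_ofReal_exp z 1
  rw [lintegral_weightMeasure, funext h]
  exact ENNReal.mul_lt_top (ENNReal.inv_lt_top.2 (pos_iff_ne_zero.2 tsum_weight_ne_zero))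
    tsum_ofReal_one_div_abs_add_one_sq_ne_top.lt_top

lemma tendsto_exp_mul_div_add_one_sq_atTop {a : ℝ} (ha : 0 < a) :
    Tendsto (fun x : ℝ => Real.exp (a * x) / (x + 1) ^ 2) atTop atTop := by
  have h := ((tendsto_exp_mul_div_rpow_atTop 2 a ha).comp
    (tendsto_atTop_add_const_right _ 1 tendsto_id)).atTop_mul_const (Real.exp_pos (-a))
  refine h.congr fun x => ?_
  simp only [Function.comp_apply, id, Real.rpow_two]
  rw [div_mul_eq_mul_div, ← Real.exp_add]
  ring_nf

lemma tendsto_weight_mul_ofReal_exp {b : ℝ} (hb : 1 < b) :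
    Tendsto (fun k : ℕ => weight k * ENNReal.ofReal (Real.exp (b * |((k : ℤ) : ℝ)|)))
      atTop (𝓝 ∞) := by
  refine (ENNReal.tendsto_ofReal_atTop.comp <| (tendsto_exp_mul_div_add_one_sq_atTop
    (sub_pos.2 hb)).comp tendsto_natCast_atTop_atTop).congr fun k => ?_
  rw [weight_mul_ofReal_exp]
  simp

lemma lintegral_exp_abs_collapse_div_eq_top {c : ℝ} (hc0 : 0 < c) (hc1 : c < 1) (n : ℕ) :
    ∫⁻ z, ENNReal.ofReal (Real.exp (|(collapse n z : ℝ)| / c)) ∂weightMeasure = ∞ := by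
  rw [lintegral_weightMeasure, ENNReal.mul_eq_top]
  refine Or.inl ⟨ENNReal.inv_ne_zero.2 tsum_weight_ne_top, ?_⟩
  by_contra h
  have h_zero := (ENNReal.tendsto_cofinite_zero_of_tsum_ne_top h).comp
    (Nat.cast_injective (R := ℤ)).tendsto_cofinite
  rw [Nat.cofinite_eq_atTop] at h_zero
  refine ENNReal.zero_ne_top <| tendsto_nhds_unique_of_eventuallyEq h_zero
    (tendsto_weight_mul_ofReal_exp (one_lt_inv₀ hc0 |>.2 hc1)) <|
    (eventually_ge_atTop n).mono fun k hk => ?_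
  rw [Function.comp_apply, collapse_of_le (by simpa using hk), div_eq_inv_mul]

end OrliczCounterexample

open OrliczCounterexample in
/-- The backward martingale convergence theorem fails in the Orlicz space
`L_ψ` with `ψ(x) = e^{|x|} - 1`: there is a probability space, a decreasing
sequence of σ-algebras `(F_n)` and `X` with `E e^{|X|} < ∞` such that
`E(X|F_n) → 0` a.s. but `‖E(X|F_n)‖_ψ ≥ 1` for all `n`. -/
theorem backward_martingale_fails_in_orlicz :
    ∃ (Ω : Type) (m0 : MeasurableSpace Ω) (μ : Measure Ω)
      (_ : IsProbabilityMeasure μ) (F : ℕ → MeasurableSpace Ω) (X : Ω → ℝ),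
      (∀ n, F (n + 1) ≤ F n) ∧ (∀ n, F n ≤ m0) ∧
      Integrable X μ ∧
      (∫⁻ ω, ENNReal.ofReal (Real.exp |X ω|) ∂μ) < ⊤ ∧
      (∀ᵐ ω ∂μ, Tendsto (fun n => (μ[X | F n]) ω) atTop (𝓝 0)) ∧
      (∀ n, 1 ≤ expOrliczNorm μ (μ[X | F n])) := by
  have h_int : Integrable (fun z : ℤ => (z : ℝ)) weightMeasure :=
    integrable_of_lintegral_exp_abs_ne_top Measurable.of_discrete.aestronglyMeasurable
      lintegral_exp_abs_lt_top.ne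
  have h_condExp (n : ℕ) := condExp_tailSigma_ae_eq h_int (fun z => Int.cast_neg z) n
  refine ⟨ℤ, inferInstance, weightMeasure, inferInstance, tailSigma, (↑),
    fun n => tailSigma_antitone n.le_succ, fun n => le_top, h_int, lintegral_exp_abs_lt_top,
    ?_, fun n => ?_⟩
  · filter_upwards [ae_all_iff.2 h_condExp] with z hz
    refine tendsto_const_nhds.congr' ?_
    filter_upwards [eventually_gt_atTop z.natAbs] with n hn
    rw [hz n, Function.comp_apply, collapse_of_lt hn, Int.cast_zero]
  · rw [expOrliczNorm_congr_ae (h_condExp n)]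
    refine one_le_expOrliczNorm (ne_top_of_le_ne_top lintegral_exp_abs_lt_top.ne ?_)
      fun c hc0 hc1 => lintegral_exp_abs_collapse_div_eq_top hc0 hc1 n
    exact lintegral_mono fun z => ENNReal.ofReal_le_ofReal <| Real.exp_le_exp.2 <|
      abs_comp_collapse_le Int.cast_zero n z
end

section
/- There exists a probability space, a decreasing sequence of σ-algebras (F_n), and a bounded random variable X with |X| ≤ 1 such that E(X | F_n) → 0 almost surely but ‖E(X | F_n)‖_∞ = 1 for all n; i.e., the backward martingale convergence theorem fails in L^∞. -/
/-!
Take `Ω = ℕ × Bool` with the product of a measure on `ℕ` charging every tail `[n, ∞)` (a geometric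
law) and a fair coin, and let `X = ±1` according to the coin; the block `{m} × Bool` plays the role
of `B_m`. The σ-algebra `F_n` keeps the points of the blocks `m ≥ n` as atoms and merges all
earlier blocks into a single atom, on which `X` has mean zero, so `E(X | F_n) = X · 1_{C_n}` with
`C_n = {m ≥ n}`. Each point leaves `C_n` once `n` exceeds its block index, yet `|X| = 1` on `C_n`,
which has positive measure.
-/

open MeasureTheory Filter ProbabilityTheory
open scoped ENNReal Topology unitInterval

section General

variable {Ω E : Type*} {m m0 : MeasurableSpace Ω} {μ : Measure Ω}

theorem condExp_add_of_forall_setIntegral_eq_zero [NormedAddCommGroup E] [NormedSpace ℝ E]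
    [CompleteSpace E] (hm : m ≤ m0) [SigmaFinite (μ.trim hm)] {f g : Ω → E}
    (hf : StronglyMeasurable[m] f) (hfi : Integrable f μ) (hgi : Integrable g μ)
    (hg : ∀ s, MeasurableSet[m] s → μ s < ∞ → ∫ x in s, g x ∂μ = 0) :
    μ[f + g | m] =ᵐ[μ] f := by
  have hg0 : μ[g | m] =ᵐ[μ] 0 :=
    (ae_eq_condExp_of_forall_setIntegral_eq hm hgi (fun _ _ _ => integrableOn_zero)
      (fun s hs hμs => by rw [hg s hs hμs, integral_zero]) aestronglyMeasurable_zero).symm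
  filter_upwards [condExp_add hfi hgi m, hg0] with x hadd hx
  rw [hadd, Pi.add_apply, hx, condExp_of_stronglyMeasurable hm hf hfi, Pi.zero_apply, add_zero]

theorem eLpNorm_top_indicator_of_norm_eq_one [NormedAddCommGroup E] {s : Set Ω} {f : Ω → E}
    (hf : ∀ x ∈ s, ‖f x‖ = 1) (hs : μ s ≠ 0) : eLpNorm (s.indicator f) ∞ μ = 1 := by
  have hnorm : ∀ x, ‖s.indicator f x‖ = ‖s.indicator (fun _ => (1 : ℝ)) x‖ := by
    intro x
    by_cases hx : x ∈ s <;> simp [hx, hf]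
  rw [eLpNorm_congr_norm_ae (Eventually.of_forall hnorm), eLpNorm_exponent_top,
    eLpNormEssSup_indicator_const_eq s _ hs, enorm_one]

theorem setIntegral_prod_univ_comp_snd {α β : Type*} [MeasurableSpace α] [MeasurableSpace β]
    [NormedAddCommGroup E] [NormedSpace ℝ E] (ν : Measure α) (ρ : Measure β) [SFinite ν]
    [SFinite ρ] (s : Set α) (g : β → E) :
    ∫ ω in s ×ˢ Set.univ, g ω.2 ∂ν.prod ρ = ν.real s • ∫ y, g y ∂ρ := by
  rw [← Measure.restrict_univ (μ := ρ), ← Measure.prod_restrict, Measure.restrict_univ,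
    integral_fun_snd, measureReal_restrict_apply_univ]

end General

section CollapsedSigma

variable {β : Type*}

def collapseBelow (n : ℕ) (ω : ℕ × β) : Option (ℕ × β) := if n ≤ ω.1 then some ω else none

abbrev collapsedSigma (n : ℕ) : MeasurableSpace (ℕ × β) :=
  MeasurableSpace.comap (collapseBelow n) ⊤

theorem collapsedSigma_antitone : Antitone (collapsedSigma (β := β)) := by
  intro m n hmn
  have hcomp :
      collapseBelow n = (fun o => o.bind (collapseBelow n)) ∘ collapseBelow (β := β) m := by
    funext ω
    by_cases hm : m ≤ ω.1
    · simp [collapseBelow, hm]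
    · simp [collapseBelow, hm, show ¬ n ≤ ω.1 by omega]
  rw [collapsedSigma, hcomp, ← MeasurableSpace.comap_comp]
  exact MeasurableSpace.comap_mono le_top

theorem collapsedSigma_le [MeasurableSpace β] [DiscreteMeasurableSpace (ℕ × β)] (n : ℕ) :
    collapsedSigma (β := β) n ≤ (inferInstance : MeasurableSpace (ℕ × β)) :=
  fun _ _ => MeasurableSet.of_discrete

theorem stronglyMeasurable_indicator_collapsedSigma (n : ℕ) (f : ℕ × β → ℝ) :
    StronglyMeasurable[collapsedSigma n] ((Prod.fst ⁻¹' Set.Ici n).indicator f) := by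
  have h : (Prod.fst ⁻¹' Set.Ici n).indicator f = (fun o => o.elim 0 f) ∘ collapseBelow n := by
    funext ω
    by_cases hn : n ≤ ω.1 <;> simp [collapseBelow, hn]
  rw [h]
  exact (measurable_from_top.comp (Measurable.of_comap_le le_rfl)).stronglyMeasurable

theorem setIntegral_indicator_compl_collapsedSigma [MeasurableSpace β] (ν : Measure ℕ)
    (ρ : Measure β) [SFinite ν] [SFinite ρ] {g : β → ℝ} (hg : ∫ y, g y ∂ρ = 0) (n : ℕ)
    {s : Set (ℕ × β)} (hs : MeasurableSet[collapsedSigma n] s) :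
    ∫ ω in s, (Prod.fst ⁻¹' Set.Ici n)ᶜ.indicator (fun ω => g ω.2) ω ∂ν.prod ρ = 0 := by
  obtain ⟨t, -, rfl⟩ := hs
  rw [setIntegral_indicator (measurable_fst measurableSet_Ici).compl]
  by_cases ht : none ∈ t
  · have hsub : (Prod.fst ⁻¹' Set.Ici n)ᶜ ⊆ collapseBelow n ⁻¹' t := fun ω hω => by
      simpa [collapseBelow, show ¬ n ≤ ω.1 from hω] using ht
    rw [Set.inter_eq_right.mpr hsub, ← Set.preimage_compl, ← Set.prod_univ,
      setIntegral_prod_univ_comp_snd, hg, smul_zero]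
  · have hdisj : collapseBelow n ⁻¹' t ∩ (Prod.fst ⁻¹' Set.Ici n)ᶜ = ∅ :=
      Set.eq_empty_iff_forall_notMem.mpr fun ω ⟨hωt, hω⟩ =>
        ht (by simpa [collapseBelow, show ¬ n ≤ ω.1 from hω] using hωt)
    rw [hdisj, Measure.restrict_empty, integral_zero_measure]

theorem condExp_comp_snd_collapsedSigma [MeasurableSpace β] [DiscreteMeasurableSpace (ℕ × β)]
    (ν : Measure ℕ) (ρ : Measure β) [IsFiniteMeasure ν] [IsFiniteMeasure ρ] {g : β → ℝ}
    (hgi : Integrable g ρ) (hg : ∫ y, g y ∂ρ = 0) (n : ℕ) :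
    (ν.prod ρ)[fun ω => g ω.2 | collapsedSigma n]
      =ᵐ[ν.prod ρ] (Prod.fst ⁻¹' Set.Ici n).indicator (fun ω => g ω.2) := by
  have hi : Integrable (fun ω : ℕ × β => g ω.2) (ν.prod ρ) := hgi.comp_snd ν
  conv_lhs => rw [← Set.indicator_self_add_compl (Prod.fst ⁻¹' Set.Ici n) (fun ω => g ω.2)]
  exact condExp_add_of_forall_setIntegral_eq_zero (collapsedSigma_le n)
    (stronglyMeasurable_indicator_collapsedSigma n _)
    (hi.indicator (measurable_fst measurableSet_Ici))
    (hi.indicator (measurable_fst measurableSet_Ici).compl)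
    (fun s hs _ => setIntegral_indicator_compl_collapsedSigma ν ρ hg n hs)

end CollapsedSigma

theorem geometricMeasure_Ici_ne_zero {p : I} (h0 : p ≠ 0) (h1 : p ≠ 1) (n : ℕ) :
    geometricMeasure p (Set.Ici n) ≠ 0 := by
  refine (measure_pos_of_superset (Set.singleton_subset_iff.mpr (Set.mem_Ici.mpr le_rfl)) ?_).ne'
  rw [geometricMeasure_singleton h0]
  exact (ENNReal.ofReal_pos.mpr (geometricMeasure_pos h0 h1 n)).ne'

theorem integral_bernoulliMeasure_sign (p : I) :
    ∫ b, (if b then 1 else -1 : ℝ) ∂Ber(true, false, p) = 2 * p - 1 := by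
  rw [integral_bernoulliMeasure]
  simp only [if_true, Bool.false_eq_true, if_false, smul_eq_mul]
  ring

/-- The backward martingale convergence theorem fails in `L^∞`: there is a
probability space, a decreasing sequence of σ-algebras `(F_n)` and a random
variable `X` with `|X| ≤ 1` such that `E(X|F_n) → 0` a.s. but
`‖E(X|F_n)‖_∞ = 1` for all `n`. -/
theorem backward_martingale_fails_in_Linfty :
    ∃ (Ω : Type) (m0 : MeasurableSpace Ω) (μ : Measure Ω)
      (_ : IsProbabilityMeasure μ) (F : ℕ → MeasurableSpace Ω) (X : Ω → ℝ),
      (∀ n, F (n + 1) ≤ F n) ∧ (∀ n, F n ≤ m0) ∧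
      (∀ ω, |X ω| ≤ 1) ∧
      (∀ᵐ ω ∂μ, Tendsto (fun n => (μ[X | F n]) ω) atTop (𝓝 0)) ∧
      (∀ n, eLpNorm (μ[X | F n]) ⊤ μ = 1) := by
  set p : I := ⟨2⁻¹, by norm_num, by norm_num⟩
  set ν := geometricMeasure p
  set ρ := Ber(true, false, p)
  set X : ℕ × Bool → ℝ := fun ω => if ω.2 then 1 else -1
  have hX : ∀ ω, ‖X ω‖ = 1 := fun ⟨_, b⟩ => by cases b <;> simp [X]
  have hρ : ∫ b, (if b then 1 else -1 : ℝ) ∂ρ = 0 := by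
    rw [integral_bernoulliMeasure_sign]
    norm_num [p]
  have hcond : ∀ n, (ν.prod ρ)[X | collapsedSigma n] =ᵐ[ν.prod ρ]
      (Prod.fst ⁻¹' Set.Ici n).indicator X :=
    condExp_comp_snd_collapsedSigma ν ρ .of_finite hρ
  refine ⟨ℕ × Bool, inferInstance, ν.prod ρ, inferInstance, collapsedSigma, X,
    fun n => collapsedSigma_antitone n.le_succ, collapsedSigma_le, fun ω => (hX ω).le, ?_, ?_⟩
  · filter_upwards [ae_all_iff.mpr hcond] with ω hω
    simp_rw [hω]
    exact tendsto_atTop_of_eventually_const (i₀ := ω.1 + 1) fun n hn =>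
      Set.indicator_of_notMem (s := Prod.fst ⁻¹' Set.Ici n) (fun h : n ≤ ω.1 => by omega) X
  · intro n
    rw [eLpNorm_congr_ae (hcond n)]
    refine eLpNorm_top_indicator_of_norm_eq_one (fun ω _ => hX ω) ?_
    rw [← Set.prod_univ, Measure.prod_prod, measure_univ, mul_one]
    exact geometricMeasure_Ici_ne_zero (by simp [p, Subtype.ext_iff]) (by simp [p, Subtype.ext_iff])
      n
end

section
/- For the random variable X = k on A'_{n,k}, X = −k on A''_{n,k}, with μ(A'_{n,k}) = μ(A''_{n,k}) = c·2^{-n} e^{-k}/(k log²k), the conditional expectation X_n = E(X | F_n) equals X·1_{C_n} where C_n = ∪_{m≥n} B_m, and for every λ > 1, E(e^{λ|X_n|}) = ∞. -/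
open MeasureTheory Filter
open scoped ENNReal

/-!
On each block `A'_{m,k} ∪ A''_{m,k}` the variable `X` takes the values `k` and `-k` on sets of
equal mass, so its integral over any union of blocks vanishes; in particular `∫_{C_nᶜ} X = 0`.
The σ-algebra `F_n` is generated by a countable partition of `C_n` into sets on which `X` is
constant, together with `C_nᶜ`. Hence `X 1_{C_n}` is `F_n`-measurable, and every `F_n`-measurable
set either contains or misses `C_nᶜ`, so `X 1_{C_nᶜ}` integrates to zero over it.
For `λ > 1` a single block already gives
`∫_{A'_{n,k}} e^{λ|X_n|} = c 2⁻ⁿ e^{(λ-1)k} / (k log² k)`, which is unbounded in `k`.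
-/

theorem MeasurableSpace.subset_or_disjoint_of_measurableSet_generateFrom {α : Type*}
    {G : Set (Set α)} {E : Set α} (hG : ∀ s ∈ G, E ⊆ s ∨ Disjoint s E) {s : Set α}
    (hs : MeasurableSet[generateFrom G] s) : E ⊆ s ∨ Disjoint s E := by
  induction s, hs using generateFrom_induction with
  | hC t ht => exact hG t ht
  | empty => exact Or.inr (Set.empty_disjoint E)
  | compl t _ ih =>
    rcases ih with h | h
    · exact Or.inr ((disjoint_compl_left (a := t)).mono_right h)
    · exact Or.inl (Set.subset_compl_iff_disjoint_left.mpr h)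
  | iUnion t _ ih =>
    by_cases h : ∃ i, E ⊆ t i
    · obtain ⟨i, hi⟩ := h
      exact Or.inl (hi.trans (Set.subset_iUnion t i))
    · push Not at h
      exact Or.inr (Set.disjoint_iUnion_left.mpr fun i => (ih i).resolve_left (h i))

theorem measurable_of_const_on_countable_cover {α β : Type*} {m : MeasurableSpace α}
    [MeasurableSpace β] {G : Set (Set α)} (hG : G.Countable)
    (hmeas : ∀ s ∈ G, MeasurableSet[m] s) (hcover : ⋃₀ G = Set.univ) {f : α → β}
    (hf : ∀ s ∈ G, ∀ x ∈ s, ∀ y ∈ s, f x = f y) : Measurable[m] f := by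
  intro T _
  have hpre : f ⁻¹' T = ⋃₀ {s ∈ G | ∃ x ∈ s, f x ∈ T} := by
    ext y
    constructor
    · intro hy
      obtain ⟨s, hs, hys⟩ := Set.mem_sUnion.mp (hcover ▸ Set.mem_univ y)
      exact ⟨s, ⟨hs, y, hys, hy⟩, hys⟩
    · rintro ⟨s, ⟨hs, x, hxs, hx⟩, hys⟩
      rwa [Set.mem_preimage, hf s hs y hys x hxs]
  rw [hpre]
  exact MeasurableSet.sUnion (hG.mono fun s hs => hs.1) fun s hs => hmeas s hs.1

section CondExp

variable {α E : Type*} [NormedAddCommGroup E] [NormedSpace ℝ E] [CompleteSpace E] {X : α → E}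

theorem condExp_eq_indicator_of_subset_or_disjoint {m m0 : MeasurableSpace α} {μ : Measure α}
    [IsFiniteMeasure μ] (hm : m ≤ m0) {D : Set α} (hD : MeasurableSet D)
    (hX : Integrable X μ) (hatom : ∀ s, MeasurableSet[m] s → Dᶜ ⊆ s ∨ Disjoint s Dᶜ)
    (hX0 : ∫ x in Dᶜ, X x ∂μ = 0) (hXD : StronglyMeasurable[m] (D.indicator X)) :
    μ[X | m] =ᵐ[μ] D.indicator X := by
  refine (ae_eq_condExp_of_forall_setIntegral_eq hm hX
    (fun s _ _ => (hX.indicator hD).integrableOn) (fun s hs _ => ?_)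
    hXD.aestronglyMeasurable).symm
  have hcompl : ∫ x in s, Dᶜ.indicator X x ∂μ = 0 := by
    rw [setIntegral_indicator hD.compl]
    rcases hatom s hs with h | h
    · rwa [Set.inter_eq_right.mpr h]
    · rw [h.inter_eq, Measure.restrict_empty, integral_zero_measure]
  calc ∫ x in s, D.indicator X x ∂μ
      = ∫ x in s, D.indicator X x ∂μ + ∫ x in s, Dᶜ.indicator X x ∂μ := by
        rw [hcompl, add_zero]
    _ = ∫ x in s, (D.indicator X + Dᶜ.indicator X) x ∂μ :=
      (integral_add (hX.indicator hD).integrableOn (hX.indicator hD.compl).integrableOn).symm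
    _ = ∫ x in s, X x ∂μ := by rw [Set.indicator_self_add_compl]

theorem condExp_generateFrom_union_compl_eq_indicator [MeasurableSpace E] [BorelSpace E]
    [SecondCountableTopology E] {m0 : MeasurableSpace α} {μ : Measure α} [IsFiniteMeasure μ]
    {P : Set (Set α)} {D : Set α} (hP : P.Countable) (hPmeas : ∀ s ∈ P, MeasurableSet s)
    (hPD : ⋃₀ P = D)
    (hXP : ∀ s ∈ P, ∀ x ∈ s, ∀ y ∈ s, X x = X y) (hX : Integrable X μ)
    (hX0 : ∫ x in Dᶜ, X x ∂μ = 0) :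
    μ[X | MeasurableSpace.generateFrom (P ∪ {Dᶜ})] =ᵐ[μ] D.indicator X := by
  have hD : MeasurableSet D := hPD ▸ MeasurableSet.sUnion hP hPmeas
  have hle : MeasurableSpace.generateFrom (P ∪ {Dᶜ}) ≤ m0 := by
    refine MeasurableSpace.generateFrom_le ?_
    rintro s (hs | rfl)
    exacts [hPmeas s hs, hD.compl]
  refine condExp_eq_indicator_of_subset_or_disjoint hle hD hX
    (fun s hs => MeasurableSpace.subset_or_disjoint_of_measurableSet_generateFrom ?_ hs) hX0
    (Measurable.stronglyMeasurable ?_)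
  · rintro s (hs | rfl)
    · exact Or.inr (Set.disjoint_compl_right_iff_subset.mpr (hPD ▸ Set.subset_sUnion_of_mem hs))
    · exact Or.inl subset_rfl
  · refine measurable_of_const_on_countable_cover (hP.union (Set.countable_singleton _))
      (fun s hs => MeasurableSpace.measurableSet_generateFrom hs)
      (by rw [Set.sUnion_union, hPD, Set.sUnion_singleton, Set.union_compl_self]) ?_
    rintro s (hs | rfl) x hx y hy
    · have hsD : s ⊆ D := hPD ▸ Set.subset_sUnion_of_mem hs
      rw [Set.indicator_of_mem (hsD hx), Set.indicator_of_mem (hsD hy), hXP s hs x hx y hy]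
    · rw [Set.indicator_of_notMem hx, Set.indicator_of_notMem hy]

theorem setIntegral_union_eq_zero_of_eq_neg {m0 : MeasurableSpace α} {μ : Measure α}
    {S T : Set α} (hST : Disjoint S T)
    (hS : MeasurableSet S) (hT : MeasurableSet T) (hμ : μ S = μ T) (hX : Integrable X μ)
    {a : E} (hXS : ∀ x ∈ S, X x = a) (hXT : ∀ x ∈ T, X x = -a) :
    ∫ x in S ∪ T, X x ∂μ = 0 := by
  rw [setIntegral_union hST hT hX.integrableOn hX.integrableOn, setIntegral_congr_fun hS hXS,
    setIntegral_congr_fun hT hXT, setIntegral_const, setIntegral_const, measureReal_def,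
    measureReal_def, hμ, smul_neg, add_neg_cancel]

end CondExp

noncomputable def blockMass (c : ℝ) (n k : ℕ) : ℝ :=
  c * (1 / 2) ^ n * Real.exp (-(k : ℝ)) / (k * (Real.log k) ^ 2)

theorem blockMass_nonneg {c : ℝ} (hc : 0 ≤ c) (n k : ℕ) : 0 ≤ blockMass c n k := by
  unfold blockMass
  positivity

theorem natCast_mul_blockMass_le {c : ℝ} (hc : 0 ≤ c) (n : ℕ) {k : ℕ} (hk : 2 ≤ k) :
    k * blockMass c n k ≤ c / Real.log 2 ^ 2 * ((1 / 2) ^ n * Real.exp (-1) ^ k) := by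
  have hk' : (2 : ℝ) ≤ k := by exact_mod_cast hk
  have hlog2 : 0 < Real.log 2 := Real.log_pos one_lt_two
  have hlog : Real.log 2 ≤ Real.log k := Real.log_le_log two_pos hk'
  calc (k : ℝ) * blockMass c n k = c * (1 / 2) ^ n * Real.exp (-k) / Real.log k ^ 2 := by
        unfold blockMass
        field_simp
    _ ≤ c * (1 / 2) ^ n * Real.exp (-k) / Real.log 2 ^ 2 := by gcongr
    _ = c / Real.log 2 ^ 2 * ((1 / 2) ^ n * Real.exp (-1) ^ k) := by
        rw [← Real.exp_nat_mul, mul_neg_one]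
        ring

theorem tendsto_exp_mul_div_mul_log_sq_atTop {a : ℝ} (ha : 0 < a) :
    Tendsto (fun x : ℝ => Real.exp (a * x) / (x * Real.log x ^ 2)) atTop atTop := by
  refine tendsto_atTop_mono' atTop ?_ (tendsto_exp_mul_div_rpow_atTop 3 a ha)
  filter_upwards [eventually_gt_atTop 1] with x hx
  have hlog : 0 < Real.log x := Real.log_pos hx
  rw [Real.rpow_ofNat]
  gcongr
  calc x * Real.log x ^ 2 ≤ x * x ^ 2 := by gcongr; exact Real.log_le_self (by linarith)
    _ = x ^ 3 := by ring

theorem tendsto_exp_mul_mul_blockMass_atTop {c l : ℝ} (hc : 0 < c) (hl : 1 < l) (n : ℕ) :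
    Tendsto (fun k : ℕ => Real.exp (l * k) * blockMass c n k) atTop atTop := by
  have h := ((tendsto_exp_mul_div_mul_log_sq_atTop (sub_pos.mpr hl)).comp
    tendsto_natCast_atTop_atTop).const_mul_atTop (by positivity : 0 < c * (1 / 2) ^ n)
  refine h.congr fun k => ?_
  simp only [Function.comp_apply, blockMass]
  rw [sub_mul, Real.exp_sub, one_mul, Real.exp_neg]
  ring

theorem lintegral_exp_mul_abs_eq_top {Ω : Type*} {m0 : MeasurableSpace Ω} {μ : Measure Ω}
    {c l : ℝ} (hc : 0 < c) (hl : 1 < l) {n : ℕ} {S : ℕ → Set Ω}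
    (hS : ∀ k, MeasurableSet (S k))
    (hμ : ∀ k, 2 ≤ k → μ (S k) = ENNReal.ofReal (blockMass c n k))
    {Y : Ω → ℝ} (hY : ∀ k, 2 ≤ k → ∀ ω ∈ S k, Y ω = k) :
    ∫⁻ ω, ENNReal.ofReal (Real.exp (l * |Y ω|)) ∂μ = ⊤ := by
  refine top_le_iff.mp (le_of_tendsto
    (ENNReal.tendsto_ofReal_atTop.comp (tendsto_exp_mul_mul_blockMass_atTop hc hl n)) ?_)
  filter_upwards [eventually_ge_atTop 2] with k hk
  have hYk : ∀ ω ∈ S k,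
      ENNReal.ofReal (Real.exp (l * |Y ω|)) = ENNReal.ofReal (Real.exp (l * k)) :=
    fun ω hω => by rw [hY k hk ω hω, abs_of_nonneg k.cast_nonneg]
  calc ENNReal.ofReal (Real.exp (l * k) * blockMass c n k)
      = ENNReal.ofReal (Real.exp (l * k)) * μ (S k) := by
        rw [hμ k hk, ENNReal.ofReal_mul (Real.exp_nonneg _)]
    _ = ∫⁻ ω in S k, ENNReal.ofReal (Real.exp (l * |Y ω|)) ∂μ := by
        rw [setLIntegral_congr_fun (hS k) hYk, setLIntegral_const]
    _ ≤ ∫⁻ ω, ENNReal.ofReal (Real.exp (l * |Y ω|)) ∂μ := setLIntegral_le_lintegral _ _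

section Blocks

variable {Ω : Type*} {m0 : MeasurableSpace Ω} {μ : Measure Ω} {A' A'' : ℕ → ℕ → Set Ω}
  {X : Ω → ℝ} {c : ℝ}

def blocksFrom (A' A'' : ℕ → ℕ → Set Ω) (n : ℕ) : Set (Set Ω) :=
  {S | ∃ m, n ≤ m ∧ ∃ k, 2 ≤ k ∧ (S = A' m k ∨ S = A'' m k)}

def blockUnion (A' A'' : ℕ → ℕ → Set Ω) (n : ℕ) : Set Ω :=
  ⋃ (m : ℕ) (_ : n ≤ m) (k : ℕ) (_ : 2 ≤ k), A' m k ∪ A'' m k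

def blockIndex (n : ℕ) : Set (ℕ × ℕ) := {p | n ≤ p.1 ∧ 2 ≤ p.2}

theorem countable_blocksFrom (n : ℕ) : (blocksFrom A' A'' n).Countable := by
  refine ((Set.countable_range fun p : ℕ × ℕ => A' p.1 p.2).union
    (Set.countable_range fun p : ℕ × ℕ => A'' p.1 p.2)).mono ?_
  rintro S ⟨m, -, k, -, rfl | rfl⟩
  exacts [Or.inl ⟨(m, k), rfl⟩, Or.inr ⟨(m, k), rfl⟩]

theorem measurableSet_of_mem_blocksFrom (hmeas' : ∀ n k, MeasurableSet (A' n k))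
    (hmeas'' : ∀ n k, MeasurableSet (A'' n k)) {n : ℕ} :
    ∀ s ∈ blocksFrom A' A'' n, MeasurableSet s := by
  rintro s ⟨m, -, k, -, rfl | rfl⟩
  exacts [hmeas' m k, hmeas'' m k]

theorem sUnion_blocksFrom (n : ℕ) :
    ⋃₀ blocksFrom A' A'' n = blockUnion A' A'' n := by
  ext x
  simp only [blocksFrom, blockUnion, Set.mem_sUnion, Set.mem_ofPred_eq, Set.mem_iUnion,
    Set.mem_union]
  constructor
  · rintro ⟨S, ⟨m, hm, k, hk, rfl | rfl⟩, hx⟩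
    exacts [⟨m, hm, k, hk, Or.inl hx⟩, ⟨m, hm, k, hk, Or.inr hx⟩]
  · rintro ⟨m, hm, k, hk, hx | hx⟩
    · exact ⟨_, ⟨m, hm, k, hk, Or.inl rfl⟩, hx⟩
    · exact ⟨_, ⟨m, hm, k, hk, Or.inr rfl⟩, hx⟩

theorem iUnion_blocks_eq_iUnion_blockIndex (n : ℕ) :
    blockUnion A' A'' n = ⋃ p : blockIndex n, A' p.1.1 p.1.2 ∪ A'' p.1.1 p.1.2 := by
  ext x
  simp [blockUnion, blockIndex, and_assoc]

theorem pairwise_disjoint_blocks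
    (hdisj' : ∀ n k n' k', (n, k) ≠ (n', k') → Disjoint (A' n k) (A' n' k'))
    (hdisj'' : ∀ n k n' k', (n, k) ≠ (n', k') → Disjoint (A'' n k) (A'' n' k'))
    (hdisj : ∀ n k n' k', Disjoint (A' n k) (A'' n' k')) :
    Pairwise (Function.onFun Disjoint fun p : ℕ × ℕ => A' p.1 p.2 ∪ A'' p.1 p.2) := by
  intro p q hpq
  exact Disjoint.union_left (Disjoint.union_right (hdisj' _ _ _ _ hpq) (hdisj _ _ _ _))
    (Disjoint.union_right (hdisj _ _ _ _).symm (hdisj'' _ _ _ _ hpq))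

theorem eq_of_mem_blocksFrom {n : ℕ} (hn : 1 ≤ n)
    (hX' : ∀ n k, 1 ≤ n → 2 ≤ k → ∀ ω ∈ A' n k, X ω = (k : ℝ))
    (hX'' : ∀ n k, 1 ≤ n → 2 ≤ k → ∀ ω ∈ A'' n k, X ω = -(k : ℝ)) :
    ∀ s ∈ blocksFrom A' A'' n, ∀ x ∈ s, ∀ y ∈ s, X x = X y := by
  rintro s ⟨m, hm, k, hk, rfl | rfl⟩ x hx y hy
  · rw [hX' m k (hn.trans hm) hk x hx, hX' m k (hn.trans hm) hk y hy]
  · rw [hX'' m k (hn.trans hm) hk x hx, hX'' m k (hn.trans hm) hk y hy]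

theorem integral_iUnion_blocks_eq_zero {n : ℕ} (hn : 1 ≤ n)
    (hmeas' : ∀ n k, MeasurableSet (A' n k)) (hmeas'' : ∀ n k, MeasurableSet (A'' n k))
    (hdisj' : ∀ n k n' k', (n, k) ≠ (n', k') → Disjoint (A' n k) (A' n' k'))
    (hdisj'' : ∀ n k n' k', (n, k) ≠ (n', k') → Disjoint (A'' n k) (A'' n' k'))
    (hdisj : ∀ n k n' k', Disjoint (A' n k) (A'' n' k'))
    (hμ : ∀ n k, 1 ≤ n → 2 ≤ k → μ (A' n k) = μ (A'' n k))
    (hX' : ∀ n k, 1 ≤ n → 2 ≤ k → ∀ ω ∈ A' n k, X ω = (k : ℝ))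
    (hX'' : ∀ n k, 1 ≤ n → 2 ≤ k → ∀ ω ∈ A'' n k, X ω = -(k : ℝ))
    (hX : Integrable X μ) :
    ∫ x in blockUnion A' A'' n, X x ∂μ = 0 := by
  rw [iUnion_blocks_eq_iUnion_blockIndex, integral_iUnion
    (fun p => (hmeas' _ _).union (hmeas'' _ _))
    ((pairwise_disjoint_blocks hdisj' hdisj'' hdisj).comp_of_injective Subtype.val_injective)
    hX.integrableOn]
  refine (tsum_congr fun ⟨(m, k), hm, hk⟩ => ?_).trans tsum_zero
  exact setIntegral_union_eq_zero_of_eq_neg (hdisj m k m k) (hmeas' m k) (hmeas'' m k)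
    (hμ m k (hn.trans hm) hk) hX (hX' m k (hn.trans hm) hk) (hX'' m k (hn.trans hm) hk)

theorem setLIntegral_enorm_block_le (hc : 0 ≤ c) {m k : ℕ} (hk : 2 ≤ k)
    (hmeas' : MeasurableSet (A' m k)) (hmeas'' : MeasurableSet (A'' m k))
    (hμ' : μ (A' m k) = ENNReal.ofReal (blockMass c m k))
    (hμ'' : μ (A'' m k) = ENNReal.ofReal (blockMass c m k))
    (hX' : ∀ ω ∈ A' m k, X ω = k) (hX'' : ∀ ω ∈ A'' m k, X ω = -k) :
    ∫⁻ x in A' m k ∪ A'' m k, ‖X x‖ₑ ∂μ ≤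
      ENNReal.ofReal (2 * (c / Real.log 2 ^ 2) * ((1 / 2) ^ m * Real.exp (-1) ^ k)) := by
  have hnorm : ∀ x ∈ A' m k ∪ A'' m k, ‖X x‖ₑ ≤ k := by
    rintro x (hx | hx)
    · rw [hX' x hx, Real.enorm_natCast]
    · rw [hX'' x hx, enorm_neg, Real.enorm_natCast]
  calc ∫⁻ x in A' m k ∪ A'' m k, ‖X x‖ₑ ∂μ
        ≤ ∫⁻ _ in A' m k ∪ A'' m k, (k : ℝ≥0∞) ∂μ :=
          setLIntegral_mono' (hmeas'.union hmeas'') hnorm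
    _ = k * μ (A' m k ∪ A'' m k) := setLIntegral_const _ _
    _ ≤ k * (μ (A' m k) + μ (A'' m k)) := by gcongr; exact measure_union_le _ _
    _ = ENNReal.ofReal (2 * (k * blockMass c m k)) := by
        have hb := blockMass_nonneg hc m k
        rw [hμ', hμ'', ← ENNReal.ofReal_natCast, ← ENNReal.ofReal_add hb hb,
          ← ENNReal.ofReal_mul k.cast_nonneg]
        ring_nf
    _ ≤ _ := ENNReal.ofReal_le_ofReal (by linarith [natCast_mul_blockMass_le hc m hk])

theorem integrable_of_blocks (hc : 0 ≤ c)
    (hmeas' : ∀ n k, MeasurableSet (A' n k)) (hmeas'' : ∀ n k, MeasurableSet (A'' n k))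
    (hμ' : ∀ n k, 1 ≤ n → 2 ≤ k → μ (A' n k) = ENNReal.ofReal (blockMass c n k))
    (hμ'' : ∀ n k, 1 ≤ n → 2 ≤ k → μ (A'' n k) = ENNReal.ofReal (blockMass c n k))
    (hcover : blockUnion A' A'' 1 = Set.univ)
    (hX' : ∀ n k, 1 ≤ n → 2 ≤ k → ∀ ω ∈ A' n k, X ω = (k : ℝ))
    (hX'' : ∀ n k, 1 ≤ n → 2 ≤ k → ∀ ω ∈ A'' n k, X ω = -(k : ℝ)) :
    Integrable X μ := by
  have hXmeas : Measurable X :=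
    measurable_of_const_on_countable_cover (countable_blocksFrom 1)
      (measurableSet_of_mem_blocksFrom hmeas' hmeas'') (by rw [sUnion_blocksFrom, hcover])
      (eq_of_mem_blocksFrom le_rfl hX' hX'')
  refine ⟨hXmeas.aestronglyMeasurable, ?_⟩
  let g : ℕ × ℕ → ℝ := fun p =>
    2 * (c / Real.log 2 ^ 2) * ((1 / 2) ^ p.1 * Real.exp (-1) ^ p.2)
  have hg : Summable g :=
    (summable_geometric_two.mul_of_nonneg (summable_geometric_of_lt_one (Real.exp_nonneg _)
      (Real.exp_lt_one_iff.mpr neg_one_lt_zero)) (fun n => by positivity)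
      (fun n => by positivity)).mul_left _
  calc ∫⁻ x, ‖X x‖ₑ ∂μ
      = ∫⁻ x in ⋃ p : blockIndex 1, A' p.1.1 p.1.2 ∪ A'' p.1.1 p.1.2,
          ‖X x‖ₑ ∂μ := by
        rw [← iUnion_blocks_eq_iUnion_blockIndex, hcover, Measure.restrict_univ]
    _ ≤ ∑' p : blockIndex 1,
          ∫⁻ x in A' p.1.1 p.1.2 ∪ A'' p.1.1 p.1.2, ‖X x‖ₑ ∂μ :=
        lintegral_iUnion_le _ _
    _ ≤ ∑' p : blockIndex 1, ENNReal.ofReal (g p) :=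
        ENNReal.tsum_le_tsum fun ⟨(m, k), hm, hk⟩ =>
          setLIntegral_enorm_block_le hc hk (hmeas' m k) (hmeas'' m k) (hμ' m k hm hk)
            (hμ'' m k hm hk) (hX' m k hm hk) (hX'' m k hm hk)
    _ ≤ ∑' p, ENNReal.ofReal (g p) :=
        ENNReal.tsum_comp_le_tsum_of_injective Subtype.val_injective _
    _ = ENNReal.ofReal (∑' p, g p) :=
        (ENNReal.ofReal_tsum_of_nonneg (fun p => by positivity) hg).symm
    _ < ⊤ := ENNReal.ofReal_lt_top

end Blocks

/-- For the concrete counterexample: `X = k` on `A'_{n,k}`, `X = -k` on `A''_{n,k}`,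
with `μ(A'_{n,k}) = μ(A''_{n,k}) = c · 2^{-n} e^{-k}/(k log² k)`, the conditional
expectation `X_n = E(X|F_n)` equals `X · 1_{C_n}` a.e. (where `C_n = ∪_{m≥n} B_m`),
and for every `λ > 1`, `E(e^{λ|X_n|}) = ∞`. -/
theorem orlicz_counterexample_condexp_and_divergence
    {Ω : Type*} {m0 : MeasurableSpace Ω} {μ : Measure Ω} [IsProbabilityMeasure μ]
    (A' A'' : ℕ → ℕ → Set Ω) (c : ℝ) (hc : 0 < c)
    (hmeas' : ∀ n k, MeasurableSet (A' n k))
    (hmeas'' : ∀ n k, MeasurableSet (A'' n k))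
    (hdisj' : ∀ n k n' k', (n, k) ≠ (n', k') → Disjoint (A' n k) (A' n' k'))
    (hdisj'' : ∀ n k n' k', (n, k) ≠ (n', k') → Disjoint (A'' n k) (A'' n' k'))
    (hdisj : ∀ n k n' k', Disjoint (A' n k) (A'' n' k'))
    (hμ' : ∀ n k, 1 ≤ n → 2 ≤ k →
      μ (A' n k) = ENNReal.ofReal
        (c * (1 / 2) ^ n * Real.exp (-(k : ℝ)) / (k * (Real.log k) ^ 2)))
    (hμ'' : ∀ n k, 1 ≤ n → 2 ≤ k →
      μ (A'' n k) = ENNReal.ofReal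
        (c * (1 / 2) ^ n * Real.exp (-(k : ℝ)) / (k * (Real.log k) ^ 2)))
    (hcover : (⋃ (n : ℕ) (_ : 1 ≤ n) (k : ℕ) (_ : 2 ≤ k), A' n k ∪ A'' n k) = Set.univ)
    (X : Ω → ℝ)
    (hX' : ∀ n k, 1 ≤ n → 2 ≤ k → ∀ ω ∈ A' n k, X ω = (k : ℝ))
    (hX'' : ∀ n k, 1 ≤ n → 2 ≤ k → ∀ ω ∈ A'' n k, X ω = -(k : ℝ))
    (B : ℕ → Set Ω) (hB : ∀ m, B m = ⋃ (k : ℕ) (_ : 2 ≤ k), A' m k ∪ A'' m k)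
    (C : ℕ → Set Ω) (hC : ∀ n, C n = ⋃ (m : ℕ) (_ : n ≤ m), B m)
    (F : ℕ → MeasurableSpace Ω)
    (hF : ∀ n, F n = MeasurableSpace.generateFrom
      ({S | ∃ m, n ≤ m ∧ ∃ k, 2 ≤ k ∧ (S = A' m k ∨ S = A'' m k)} ∪ {(C n)ᶜ})) :
    ∀ n, 1 ≤ n →
      (μ[X | F n] =ᵐ[μ] (C n).indicator X) ∧
      ∀ l : ℝ, 1 < l →
        ∫⁻ ω, ENNReal.ofReal (Real.exp (l * |(C n).indicator X ω|)) ∂μ = ⊤ := by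
  have hcover' : blockUnion A' A'' 1 = Set.univ := hcover
  have hXint : Integrable X μ :=
    integrable_of_blocks hc.le hmeas' hmeas'' hμ' hμ'' hcover' hX' hX''
  have hint : ∀ n, 1 ≤ n → ∫ x in blockUnion A' A'' n, X x ∂μ = 0 := fun n hn =>
    integral_iUnion_blocks_eq_zero hn hmeas' hmeas'' hdisj' hdisj'' hdisj
      (fun n k hn hk => (hμ' n k hn hk).trans (hμ'' n k hn hk).symm) hX' hX'' hXint
  intro n hn
  have hmeasP := measurableSet_of_mem_blocksFrom hmeas' hmeas'' (n := n)
  have hCn : ⋃₀ blocksFrom A' A'' n = C n := by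
    simp only [sUnion_blocksFrom, blockUnion, hC, hB]
  have hCmeas : MeasurableSet (C n) := hCn ▸ MeasurableSet.sUnion (countable_blocksFrom n) hmeasP
  have hX0 : ∫ x in (C n)ᶜ, X x ∂μ = 0 := by
    rw [setIntegral_compl hCmeas hXint, ← hCn, sUnion_blocksFrom, hint n hn, ← setIntegral_univ,
      ← hcover', hint 1 le_rfl, sub_zero]
  refine ⟨hF n ▸ condExp_generateFrom_union_compl_eq_indicator (countable_blocksFrom n) hmeasP
    hCn (eq_of_mem_blocksFrom hn hX' hX'') hXint hX0,
    fun l hl => lintegral_exp_mul_abs_eq_top hc hl (hmeas' n) (hμ' n · hn) ?_⟩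
  intro k hk ω hω
  rw [Set.indicator_of_mem (hCn ▸ Set.mem_sUnion_of_mem hω ⟨n, le_rfl, k, hk, Or.inl rfl⟩),
    hX' n k hn hk ω hω]
end

section
/- Under the hypotheses X_i = Y_i + U_i − U_{i+1}, (Y_i), (U_i) square integrable, liminf (1/n)E(Σ_{i=1}^n Y_i)² > 0 and U_n/√n → 0 in L², the normalized sums (1/σ̄_n)Σ_{i=1}^n X_i converge in distribution to a standard normal law if and only if (1/σ_n)Σ_{i=1}^n Y_i do, where σ̄_n² = E(Σ X_i)², σ_n² = E(Σ Y_i)². -/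
open MeasureTheory Filter Finset ProbabilityTheory Asymptotics
open scoped ENNReal Topology

/-!
Write `Sₙˣ = Σᵢ₌₁ⁿ Xᵢ` and `Sₙʸ = Σᵢ₌₁ⁿ Yᵢ`. The decomposition telescopes to
`Sₙˣ - Sₙʸ = U₁ - Uₙ₊₁`, which is `o(√n)` in `L²`, while the liminf hypothesis gives
`√n = O(σₙ)`; hence `Sₙˣ - Sₙʸ = o(‖Sₙʸ‖₂)`. In any real normed space
`‖y‖ · ‖x/‖x‖ - y/‖y‖‖ ≤ 2‖x - y‖`, so the two normalized sums differ by a term tending to `0`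
in `L²`, hence in probability, and Slutsky's lemma transfers convergence in distribution in
both directions.
-/

theorem Finset.sum_Icc_add_sub_succ {M : Type*} [AddCommGroup M] (a u : ℕ → M) (n : ℕ) :
    ∑ i ∈ Icc 1 n, (a i + u i - u (i + 1)) = ∑ i ∈ Icc 1 n, a i + (u 1 - u (n + 1)) := by
  induction n with
  | zero => simp
  | succ n ih =>
    rw [sum_Icc_succ_top (by omega), sum_Icc_succ_top (by omega), ih]
    abel

theorem isBigO_natCast_of_liminf_pos {s : ℕ → ℝ} (hs0 : ∀ n, 0 ≤ s n)
    (hs : 0 < liminf (fun n : ℕ => 1 / (n : ℝ) * s n) atTop) :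
    (fun n : ℕ => (n : ℝ)) =O[atTop] s := by
  set c := liminf (fun n : ℕ => 1 / (n : ℝ) * s n) atTop
  have hbdd : IsBoundedUnder (· ≥ ·) atTop fun n : ℕ => 1 / (n : ℝ) * s n :=
    isBoundedUnder_of ⟨0, fun n => mul_nonneg (by positivity) (hs0 n)⟩
  refine IsBigO.of_bound (2 / c) ?_
  filter_upwards [eventually_lt_of_lt_liminf (half_lt_self hs) hbdd, eventually_gt_atTop 0]
    with n hn hn0
  have hn0' : (0 : ℝ) < n := by exact_mod_cast hn0
  rw [Real.norm_natCast, Real.norm_of_nonneg (hs0 n), div_mul_eq_mul_div, le_div_iff₀ hs]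
  rw [one_div_mul_eq_div, lt_div_iff₀ hn0'] at hn
  linarith

theorem isBigO_natCast_succ_natCast :
    (fun n : ℕ => ((n + 1 : ℕ) : ℝ)) =O[atTop] fun n : ℕ => (n : ℝ) := by
  refine IsBigO.of_bound 2 ?_
  filter_upwards [eventually_ge_atTop 1] with n hn
  have hn' : (1 : ℝ) ≤ n := by exact_mod_cast hn
  rw [Real.norm_natCast, Real.norm_natCast]
  push_cast
  linarith

section NormalizedDifference

variable {E : Type*} [NormedAddCommGroup E] [NormedSpace ℝ E]

theorem norm_mul_norm_inv_norm_smul_sub_le (x y : E) :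
    ‖y‖ * ‖‖x‖⁻¹ • x - ‖y‖⁻¹ • y‖ ≤ 2 * ‖x - y‖ := by
  have hsplit : ‖y‖ • (‖x‖⁻¹ • x - ‖y‖⁻¹ • y) = (x - y) + (‖y‖ * ‖x‖⁻¹ - 1) • x := by
    rcases eq_or_ne y 0 with rfl | hy
    · simp
    · rw [smul_sub, smul_smul, smul_smul, mul_inv_cancel₀ (norm_ne_zero_iff.mpr hy), one_smul,
        sub_smul, one_smul]
      abel
  have hrescale : ‖(‖y‖ * ‖x‖⁻¹ - 1) • x‖ ≤ ‖x - y‖ := by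
    rcases eq_or_ne x 0 with rfl | hx
    · simp
    · have hx' : ‖x‖ ≠ 0 := norm_ne_zero_iff.mpr hx
      rw [norm_smul, Real.norm_eq_abs, ← abs_norm x, ← abs_mul, sub_mul, abs_norm,
        inv_mul_cancel_right₀ hx', one_mul, abs_sub_comm]
      exact abs_norm_sub_norm_le x y
  calc ‖y‖ * ‖‖x‖⁻¹ • x - ‖y‖⁻¹ • y‖ = ‖‖y‖ • (‖x‖⁻¹ • x - ‖y‖⁻¹ • y)‖ := by
        rw [norm_smul, norm_norm]
    _ ≤ ‖x - y‖ + ‖(‖y‖ * ‖x‖⁻¹ - 1) • x‖ := hsplit ▸ norm_add_le _ _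
    _ ≤ 2 * ‖x - y‖ := by linarith

theorem Asymptotics.IsLittleO.tendsto_inv_norm_smul_sub {ι : Type*} {l : Filter ι}
    {x y : ι → E} (h : (x - y) =o[l] y) :
    Tendsto (fun i => ‖x i‖⁻¹ • x i - ‖y i‖⁻¹ • y i) l (𝓝 0) := by
  rw [← isLittleO_one_iff ℝ, isLittleO_iff]
  intro c hc
  filter_upwards [h.def (half_pos hc)] with i hi
  rcases eq_or_ne (y i) 0 with hy | hy
  · have : x i = y i := by simpa [hy, sub_eq_zero] using hi
    simp [this, hc.le]
  · have hpos : 0 < ‖y i‖ := norm_pos_iff.mpr hy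
    have := norm_mul_norm_inv_norm_smul_sub_le (x i) (y i)
    rw [norm_one, mul_one]
    simp only [Pi.sub_apply] at hi
    refine le_of_mul_le_mul_left ?_ hpos
    linarith

end NormalizedDifference

section Lp

variable {ι Ω E : Type*} {l : Filter ι} {m : MeasurableSpace Ω} {μ : Measure Ω}

theorem sqrt_integral_sq_eq_toReal_eLpNorm {f : Ω → ℝ} (hf : MemLp f 2 μ) :
    √(∫ ω, f ω ^ 2 ∂μ) = (eLpNorm f 2 μ).toReal := by
  rw [← Lp.norm_toLp f hf, ← Real.sqrt_sq (norm_nonneg _), ← real_inner_self_eq_norm_sq,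
    L2.inner_def]
  congr 1
  refine integral_congr_ae ?_
  filter_upwards [hf.coeFn_toLp] with ω hω
  simp [hω, sq]

theorem isLittleO_toReal_eLpNorm_of_tendsto_eLpNorm_div {p : ℝ≥0∞} {f : ι → Ω → ℝ} {c : ι → ℝ}
    (hc : ∀ᶠ i in l, c i ≠ 0)
    (h : Tendsto (fun i => eLpNorm (fun ω => f i ω / c i) p μ) l (𝓝 0)) :
    (fun i => (eLpNorm (f i) p μ).toReal) =o[l] c := by
  rw [← isLittleO_norm_right,
    isLittleO_iff_tendsto' (hc.mono fun i hi h0 => absurd (norm_eq_zero.mp h0) hi)]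
  have hdiv : ∀ i, eLpNorm (fun ω => f i ω / c i) p μ = ‖(c i)⁻¹‖ₑ * eLpNorm (f i) p μ :=
    fun i => by
      rw [← eLpNorm_const_smul]
      congr 1 with ω
      exact div_eq_inv_mul _ _
  refine ((ENNReal.tendsto_toReal ENNReal.zero_ne_top).comp h).congr fun i => ?_
  rw [Function.comp_apply, hdiv, ENNReal.toReal_mul, toReal_enorm, norm_inv, div_eq_inv_mul]

theorem isLittleO_toReal_eLpNorm_sub_succ [NormedAddCommGroup E] {p : ℝ≥0∞} [Fact (1 ≤ p)]
    {U : ℕ → Ω → E} (hU2 : ∀ n, MemLp (U n) p μ)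
    (hU : (fun n => (eLpNorm (U n) p μ).toReal) =o[atTop] fun n : ℕ => √(n : ℝ)) :
    (fun n => (eLpNorm (U 1 - U (n + 1)) p μ).toReal) =o[atTop]
      fun n : ℕ => √((n + 1 : ℕ) : ℝ) := by
  have hsub : ∀ n, (eLpNorm (U 1 - U (n + 1)) p μ).toReal ≤
      (eLpNorm (U 1) p μ).toReal + (eLpNorm (U (n + 1)) p μ).toReal := fun n =>
    (ENNReal.toReal_mono
      (ENNReal.add_ne_top.mpr ⟨(hU2 1).eLpNorm_ne_top, (hU2 (n + 1)).eLpNorm_ne_top⟩)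
      (eLpNorm_sub_le (hU2 1).1 (hU2 (n + 1)).1 Fact.out)).trans_eq
      (ENNReal.toReal_add (hU2 1).eLpNorm_ne_top (hU2 (n + 1)).eLpNorm_ne_top)
  have hconst : (fun _ : ℕ => (eLpNorm (U 1) p μ).toReal) =o[atTop]
      fun n : ℕ => √((n + 1 : ℕ) : ℝ) :=
    isLittleO_const_left.mpr <| .inr <| tendsto_norm_atTop_atTop.comp <|
      Real.tendsto_sqrt_atTop.comp <| tendsto_natCast_atTop_atTop.comp <|
      tendsto_add_atTop_nat 1
  refine (IsBigO.of_norm_le fun n => ?_).trans_isLittleO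
    (hconst.add (hU.comp_tendsto (tendsto_add_atTop_nat 1)))
  rw [Real.norm_of_nonneg ENNReal.toReal_nonneg]
  exact hsub n

theorem tendstoInMeasure_inv_smul_sub_of_isLittleO [NormedAddCommGroup E] [NormedSpace ℝ E]
    {p : ℝ≥0∞} [Fact (1 ≤ p)] {f g : ι → Ω → E} (hf : ∀ i, MemLp (f i) p μ)
    (hg : ∀ i, MemLp (g i) p μ)
    (hfg : (fun i => (eLpNorm (f i - g i) p μ).toReal) =o[l]
      fun i => (eLpNorm (g i) p μ).toReal) :
    TendstoInMeasure μ (fun i ω => (eLpNorm (f i) p μ).toReal⁻¹ • f i ω -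
      (eLpNorm (g i) p μ).toReal⁻¹ • g i ω) l 0 := by
  set F := fun i => (hf i).toLp (f i)
  set G := fun i => (hg i).toLp (g i)
  have hFG : (F - G) =o[l] G := by
    rw [← isLittleO_norm_norm]
    simpa only [F, G, Pi.sub_apply, ← MemLp.toLp_sub, Lp.norm_toLp] using hfg
  refine (tendstoInMeasure_of_tendsto_Lp hFG.tendsto_inv_norm_smul_sub).congr (fun i => ?_)
    (Lp.coeFn_zero E p μ)
  filter_upwards [Lp.coeFn_sub (‖F i‖⁻¹ • F i) (‖G i‖⁻¹ • G i), Lp.coeFn_smul ‖F i‖⁻¹ (F i),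
    Lp.coeFn_smul ‖G i‖⁻¹ (G i), (hf i).coeFn_toLp, (hg i).coeFn_toLp] with ω h₁ h₂ h₃ h₄ h₅
  rw [h₁, Pi.sub_apply, h₂, h₃]
  simp only [Pi.smul_apply, F, G, h₄, h₅, Lp.norm_toLp]

end Lp

section ConvergenceInDistribution

variable {ι Ω Ω' E : Type*} {l : Filter ι} {m : MeasurableSpace Ω} {m' : MeasurableSpace Ω'}
  {μ : Measure Ω} {μ' : Measure Ω'} [IsProbabilityMeasure μ] [IsProbabilityMeasure μ']

theorem tendstoInDistribution_iff_forall_integral_tendsto [TopologicalSpace E]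
    [MeasurableSpace E] [OpensMeasurableSpace E] {X : ι → Ω → E} {Z : Ω' → E}
    (hX : ∀ i, AEMeasurable (X i) μ) (hZ : AEMeasurable Z μ') :
    TendstoInDistribution X l Z (fun _ => μ) μ' ↔ ∀ g : BoundedContinuousFunction E ℝ,
      Tendsto (fun i => ∫ ω, g (X i ω) ∂μ) l (𝓝 (∫ ω, g (Z ω) ∂μ')) := by
  refine ⟨fun h g => ?_, fun h => ⟨hX, hZ, ?_⟩⟩
  · simpa only [ProbabilityMeasure.coe_mk, integral_map hZ g.continuous.aestronglyMeasurable,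
      fun i => integral_map (hX i) g.continuous.aestronglyMeasurable] using
      ProbabilityMeasure.tendsto_iff_forall_integral_tendsto.mp h.tendsto g
  · refine ProbabilityMeasure.tendsto_iff_forall_integral_tendsto.mpr fun g => ?_
    simpa only [ProbabilityMeasure.coe_mk, integral_map hZ g.continuous.aestronglyMeasurable,
      fun i => integral_map (hX i) g.continuous.aestronglyMeasurable] using h g

theorem forall_tendsto_integral_comp_iff_of_tendstoInMeasure_sub [NormedAddCommGroup E]
    [MeasurableSpace E] [SecondCountableTopology E] [BorelSpace E] [l.IsCountablyGenerated]
    {X Y : ι → Ω → E} {Z : Ω' → E} (hX : ∀ i, AEMeasurable (X i) μ)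
    (hY : ∀ i, AEMeasurable (Y i) μ) (hZ : AEMeasurable Z μ')
    (hXY : TendstoInMeasure μ (X - Y) l 0) :
    (∀ g : BoundedContinuousFunction E ℝ,
        Tendsto (fun i => ∫ ω, g (X i ω) ∂μ) l (𝓝 (∫ ω, g (Z ω) ∂μ'))) ↔
      ∀ g : BoundedContinuousFunction E ℝ,
        Tendsto (fun i => ∫ ω, g (Y i ω) ∂μ) l (𝓝 (∫ ω, g (Z ω) ∂μ')) := by
  have hYX : TendstoInMeasure μ (Y - X) l 0 := by
    simpa only [tendstoInMeasure_iff_norm, Pi.sub_apply, Pi.zero_apply, sub_zero, norm_sub_rev]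
      using hXY
  rw [← tendstoInDistribution_iff_forall_integral_tendsto hX hZ,
    ← tendstoInDistribution_iff_forall_integral_tendsto hY hZ]
  exact ⟨fun h => tendstoInDistribution_of_tendstoInMeasure_sub Y Z h hYX hY,
    fun h => tendstoInDistribution_of_tendstoInMeasure_sub X Z h hXY hX⟩

end ConvergenceInDistribution

theorem clt_equivalence_general
    {Ω : Type*} {m0 : MeasurableSpace Ω} {μ : Measure Ω} [IsProbabilityMeasure μ]
    (X Y U : ℕ → Ω → ℝ)
    (hY2 : ∀ i, MemLp (Y i) 2 μ) (hU2 : ∀ i, MemLp (U i) 2 μ)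
    (hdecomp : ∀ i, X i = fun ω => Y i ω + U i ω - U (i + 1) ω)
    (hliminf : 0 < Filter.liminf (fun n : ℕ =>
      (1 / (n : ℝ)) * ∫ ω, (∑ i ∈ Finset.Icc 1 n, Y i ω) ^ 2 ∂μ) atTop)
    (hUo : Tendsto (fun n : ℕ =>
      eLpNorm (fun ω => U n ω / Real.sqrt n) 2 μ) atTop (𝓝 0))
    (σbar σ : ℕ → ℝ)
    (hσbar : ∀ n, σbar n = Real.sqrt (∫ ω, (∑ i ∈ Finset.Icc 1 n, X i ω) ^ 2 ∂μ))
    (hσ : ∀ n, σ n = Real.sqrt (∫ ω, (∑ i ∈ Finset.Icc 1 n, Y i ω) ^ 2 ∂μ)) :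
    (∀ g : BoundedContinuousFunction ℝ ℝ,
      Tendsto (fun n : ℕ => ∫ ω, g ((σbar n)⁻¹ * ∑ i ∈ Finset.Icc 1 n, X i ω) ∂μ)
        atTop (𝓝 (∫ x, g x ∂(gaussianReal 0 1)))) ↔
    (∀ g : BoundedContinuousFunction ℝ ℝ,
      Tendsto (fun n : ℕ => ∫ ω, g ((σ n)⁻¹ * ∑ i ∈ Finset.Icc 1 n, Y i ω) ∂μ)
        atTop (𝓝 (∫ x, g x ∂(gaussianReal 0 1)))) := by
  set SX : ℕ → Ω → ℝ := fun n ω => ∑ i ∈ Icc 1 n, X i ω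
  set SY : ℕ → Ω → ℝ := fun n ω => ∑ i ∈ Icc 1 n, Y i ω
  have htel : ∀ n, SX n - SY n = U 1 - U (n + 1) := fun n => funext fun ω => by
    simp only [Pi.sub_apply, SX, SY, hdecomp, sum_Icc_add_sub_succ (Y · ω) (U · ω)]
    ring
  have hSY : ∀ n, MemLp (SY n) 2 μ := fun n => memLp_finsetSum _ fun i _ => hY2 i
  have hSX : ∀ n, MemLp (SX n) 2 μ := fun n => by
    simpa [← htel n] using (hSY n).add ((hU2 1).sub (hU2 (n + 1)))
  have hU : (fun n => (eLpNorm (U n) 2 μ).toReal) =o[atTop] fun n : ℕ => √(n : ℝ) :=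
    isLittleO_toReal_eLpNorm_of_tendsto_eLpNorm_div
      ((eventually_gt_atTop 0).mono fun n hn => by positivity) hUo
  have hgrowth : (fun n : ℕ => √((n + 1 : ℕ) : ℝ)) =O[atTop]
      fun n => (eLpNorm (SY n) 2 μ).toReal := by
    refine IsBigO.congr_right ?_ fun n => sqrt_integral_sq_eq_toReal_eLpNorm (hSY n)
    exact (isBigO_natCast_succ_natCast.trans (isBigO_natCast_of_liminf_pos
      (fun n => integral_nonneg fun ω => sq_nonneg _) hliminf)).sqrt
      (.of_forall fun n => integral_nonneg fun ω => sq_nonneg _)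
  have hsmall : (fun n => (eLpNorm (SX n - SY n) 2 μ).toReal) =o[atTop]
      fun n => (eLpNorm (SY n) 2 μ).toReal := by
    simp only [htel]
    exact (isLittleO_toReal_eLpNorm_sub_succ hU2 hU).trans_isBigO hgrowth
  obtain rfl : σbar = fun n => (eLpNorm (SX n) 2 μ).toReal :=
    funext fun n => (hσbar n).trans (sqrt_integral_sq_eq_toReal_eLpNorm (hSX n))
  obtain rfl : σ = fun n => (eLpNorm (SY n) 2 μ).toReal :=
    funext fun n => (hσ n).trans (sqrt_integral_sq_eq_toReal_eLpNorm (hSY n))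
  exact forall_tendsto_integral_comp_iff_of_tendstoInMeasure_sub
    (fun n => (hSX n).aestronglyMeasurable.aemeasurable.const_mul _)
    (fun n => (hSY n).aestronglyMeasurable.aemeasurable.const_mul _) aemeasurable_id
    (tendstoInMeasure_inv_smul_sub_of_isLittleO hSX hSY hsmall)

/-- Proposition 1.4 (CLT part): under `X_i = Y_i + U_i - U_{i+1}`,
`liminf (1/n)E(Σ Y_i)² > 0` and `U_n/√n → 0` in `L²`, the normalized sums
`(1/σ̄_n) Σ_{i=1}^n X_i` converge in distribution to the standard normal law
if and only if `(1/σ_n) Σ_{i=1}^n Y_i` do. -/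
theorem clt_equivalence
    {Ω : Type*} {m0 : MeasurableSpace Ω} {μ : Measure Ω} [IsProbabilityMeasure μ]
    (𝓕 : Filtration ℕ m0) (X Y U : ℕ → Ω → ℝ)
    (hY2 : ∀ i, MemLp (Y i) 2 μ) (hU2 : ∀ i, MemLp (U i) 2 μ)
    (hYmeas : ∀ i, AEStronglyMeasurable[𝓕 i] (Y i) μ)
    (hYmds : ∀ i, 1 ≤ i → μ[Y i | 𝓕 (i - 1)] =ᵐ[μ] 0)
    (hdecomp : ∀ i, X i = fun ω => Y i ω + U i ω - U (i + 1) ω)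
    (hliminf : 0 < Filter.liminf (fun n : ℕ =>
      (1 / (n : ℝ)) * ∫ ω, (∑ i ∈ Finset.Icc 1 n, Y i ω) ^ 2 ∂μ) atTop)
    (hUo : Tendsto (fun n : ℕ =>
      eLpNorm (fun ω => U n ω / Real.sqrt n) 2 μ) atTop (𝓝 0))
    (σbar σ : ℕ → ℝ)
    (hσbar : ∀ n, σbar n = Real.sqrt (∫ ω, (∑ i ∈ Finset.Icc 1 n, X i ω) ^ 2 ∂μ))
    (hσ : ∀ n, σ n = Real.sqrt (∫ ω, (∑ i ∈ Finset.Icc 1 n, Y i ω) ^ 2 ∂μ)) :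
    (∀ g : BoundedContinuousFunction ℝ ℝ,
      Tendsto (fun n : ℕ => ∫ ω, g ((σbar n)⁻¹ * ∑ i ∈ Finset.Icc 1 n, X i ω) ∂μ)
        atTop (𝓝 (∫ x, g x ∂(gaussianReal 0 1)))) ↔
    (∀ g : BoundedContinuousFunction ℝ ℝ,
      Tendsto (fun n : ℕ => ∫ ω, g ((σ n)⁻¹ * ∑ i ∈ Finset.Icc 1 n, Y i ω) ∂μ)
        atTop (𝓝 (∫ x, g x ∂(gaussianReal 0 1)))) :=
  clt_equivalence_general (m0 := m0) X Y U hY2 hU2 hdecomp hliminf hUo σbar σ hσbar hσ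
end
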